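/- arXiv:math/0612570 — 6 statements merged into one kernel-verified Lean document; each statement's English description precedes it below -/
import Mathlib

section
/- Let 𝔄 be a unital C*-algebra, 𝔅 ⊆ 𝔄 a unital C*-subalgebra containing the unit of 𝔄, and Φ : 𝔄 → 𝔅 a positive conditional expectation. Let X, Y ∈ 𝔄 be such that the norm-closed subalgebras generated by {X} ∪ 𝔅 (index 1) and by {Y} ∪ 𝔅 (index 2) are monotonically independent over 𝔅. For W ∈ 𝔄 and z ∈ 𝔅 with ‖z‖·‖W‖ < 1 define 𝔥_W(z) = Φ((1 − zW)⁻¹ z). Then there exists ε > 0 such that for all z ∈ 𝔅 with ‖z‖ < ε all the relevant inverses exist and 𝔥_{X+Y}(z) = 𝔥_X(𝔥_Y(z)). -/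
open scoped BigOperators

/-- An index tuple `j : Fin (ℓ+1) → I` is V-shaped if it is strictly decreasing up to some
position `t` and strictly increasing from `t` on; this encodes the index patterns
`i_m > ⋯ > i_1 < k_1 < ⋯ < k_n` appearing in condition (b) of monotonic independence. -/
def VShaped {I : Type*} [LinearOrder I] {ℓ : ℕ} (j : Fin (ℓ + 1) → I) : Prop :=
  ∃ t : Fin (ℓ + 1),
    (∀ r s : Fin (ℓ + 1), r < s → s ≤ t → j s < j r) ∧
    (∀ r s : Fin (ℓ + 1), t ≤ r → r < s → j r < j s)

/-- A family of subsets `S i` of `A`, indexed by a totally ordered set `I`, is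
monotonically independent with respect to `Φ : A → A`
(`Φ` being a `𝔅`-valued conditional expectation, viewed inside `A`) if:
(a) `Φ (A X_i X_j X_k B) = Φ (A X_i Φ(X_j) X_k B)` whenever `i < j > k` (with the
outer factors `A`, `B` possibly omitted), and
(b) `Φ` factorizes on products whose index tuple decreases strictly and then increases
strictly (`i_m > ⋯ > i_1 < k_1 < ⋯ < k_n`). -/
def MonoIndep {A : Type*} [Monoid A] {I : Type*} [LinearOrder I]
    (Φ : A → A) (S : I → Set A) : Prop :=
  (∀ i j k : I, i < j → k < j → ∀ x ∈ S i, ∀ y ∈ S j, ∀ z ∈ S k,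
      (∀ a b : A, Φ (a * x * y * z * b) = Φ (a * x * Φ y * z * b)) ∧
      (∀ b : A, Φ (x * y * z * b) = Φ (x * Φ y * z * b)) ∧
      (∀ a : A, Φ (a * x * y * z) = Φ (a * x * Φ y * z)) ∧
      Φ (x * y * z) = Φ (x * Φ y * z)) ∧
  (∀ (ℓ : ℕ) (j : Fin (ℓ + 1) → I), VShaped j →
      ∀ x : Fin (ℓ + 1) → A, (∀ r, x r ∈ S (j r)) →
      Φ (List.ofFn x).prod = (List.ofFn fun r => Φ (x r)).prod)

/-- The operator-valued transform `𝔥_W(z) = Φ((1 - zW)⁻¹ z)`. -/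
noncomputable def hTrans {A : Type*} [Ring A] [Algebra ℂ A]
    (Φ : A →ₗ[ℂ] A) (W z : A) : A :=
  Φ (Ring.inverse (1 - z * W) * z)

/-!
Put `u = (1 - zY)⁻¹ z`, which lies in the closed algebra generated by `Y` and `𝔅`, and `w = Φ u`.
Then `1 - z(X + Y) = (1 - zY)(1 - uX)`, so `𝔥_{X+Y}(z) = Φ((1 - uX)⁻¹ u) = ∑ₙ Φ((uX)ⁿ u)`, while
`𝔥_X(𝔥_Y(z)) = ∑ₙ Φ((wX)ⁿ w)`. The two series agree termwise: condition (a) replaces every inner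
`u` of `u X u X ⋯ X u` by `w`, condition (b) factors the outer `u`s out as `w`s, and the bimodule
property puts them back inside `Φ`. A positive map is continuous, so `Φ` commutes with the sums.
-/

open Filter Topology

lemma map_mul_pow_succ_eq {M N : Type*} [Monoid M] (Φ : M → N) {x u w : M}
    (h : ∀ a b, Φ (a * x * u * x * b) = Φ (a * x * w * x * b)) (k : ℕ) (a : M) :
    Φ (a * (x * u) ^ (k + 1)) = Φ (a * ((x * w) ^ k * (x * u))) := by
  induction k generalizing a with
  | zero => simp
  | succ k ih =>
    calc Φ (a * (x * u) ^ (k + 2)) = Φ (a * x * u * x * (u * (x * u) ^ k)) := by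
          simp only [pow_succ', mul_assoc]
      _ = Φ (a * x * w * x * (u * (x * u) ^ k)) := h _ _
      _ = Φ (a * x * w * (x * u) ^ (k + 1)) := by simp only [pow_succ', mul_assoc]
      _ = Φ (a * x * w * ((x * w) ^ k * (x * u))) := ih _
      _ = Φ (a * ((x * w) ^ (k + 1) * (x * u))) := by simp only [pow_succ', mul_assoc]

section Resolvent

variable {R : Type*} [Ring R] {x y z u : R}

lemma one_sub_mul_add_eq_mul (hu : (1 - z * y) * u = z) :
    1 - z * (x + y) = (1 - z * y) * (1 - u * x) := by
  calc 1 - z * (x + y) = (1 - z * y) - z * x := by noncomm_ring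
    _ = (1 - z * y) - (1 - z * y) * u * x := by rw [hu]
    _ = (1 - z * y) * (1 - u * x) := by noncomm_ring

lemma inverse_one_sub_mul_add_mul_eq (hy : IsUnit (1 - z * y)) (hu : (1 - z * y) * u = z) :
    Ring.inverse (1 - z * (x + y)) * z = Ring.inverse (1 - u * x) * u := by
  have hinv : Ring.inverse (1 - z * y) * z = u :=
    calc Ring.inverse (1 - z * y) * z = Ring.inverse (1 - z * y) * ((1 - z * y) * u) := by rw [hu]
      _ = u := by rw [← mul_assoc, Ring.inverse_mul_cancel _ hy, one_mul]
  rw [one_sub_mul_add_eq_mul hu, Ring.inverse_mul (.inl hy), mul_assoc, hinv]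

end Resolvent

section NeumannSeries

variable {A : Type*} [NormedRing A] [CompleteSpace A]

lemma inverse_one_sub_mul_eq_tsum {a : A} (ha : ‖a‖ < 1) (b : A) :
    Ring.inverse (1 - a) * b = ∑' n, a ^ n * b := by
  rw [← geom_series_eq_inverse a ha, (summable_geometric_of_norm_lt_one ha).tsum_mul_right]

lemma inverse_one_sub_mem {S : Type*} [SetLike S A] [SubsemiringClass S A] {s : S}
    (hs : IsClosed (s : Set A)) {a : A} (ha : a ∈ s) (h : ‖a‖ < 1) :
    Ring.inverse (1 - a) ∈ s := by
  rw [← geom_series_eq_inverse a h]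
  exact tsum_mem hs fun n => pow_mem ha n

lemma map_inverse_one_sub_mul_mul_eq {B F : Type*} [AddCommMonoid B] [TopologicalSpace B]
    [T2Space B] [FunLike F A B] [AddMonoidHomClass F A B] (Φ : F) (hΦ : Continuous Φ)
    {u w x : A} (hu : ‖u * x‖ < 1) (hw : ‖w * x‖ < 1)
    (h : ∀ n, Φ ((u * x) ^ n * u) = Φ ((w * x) ^ n * w)) :
    Φ (Ring.inverse (1 - u * x) * u) = Φ (Ring.inverse (1 - w * x) * w) := by
  rw [inverse_one_sub_mul_eq_tsum hu, inverse_one_sub_mul_eq_tsum hw,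
    ((summable_geometric_of_norm_lt_one hu).mul_right u).map_tsum Φ hΦ,
    ((summable_geometric_of_norm_lt_one hw).mul_right w).map_tsum Φ hΦ, tsum_congr h]

lemma tendsto_inverse_one_sub_mul_mul (y : A) :
    Tendsto (fun z => Ring.inverse (1 - z * y) * z) (𝓝 0) (𝓝 0) := by
  have hinv : ContinuousAt (fun z : A => Ring.inverse (1 - z * y)) 0 :=
    (NormedRing.inverse_continuousAt (1 : Aˣ)).comp_of_eq (by fun_prop) (by simp)
  simpa using hinv.tendsto.mul tendsto_id

omit [CompleteSpace A] in
lemma eventually_norm_mul_lt_one {X : Type*} {l : Filter X} {f : X → A}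
    (hf : Tendsto f l (𝓝 0)) (x : A) : ∀ᶠ t in l, ‖f t * x‖ < 1 := by
  have : Tendsto (fun t => ‖f t * x‖) l (𝓝 0) := by simpa using (hf.mul_const x).norm
  exact this.eventually_lt_const one_pos

end NeumannSeries

namespace MonoIndep

variable {A : Type*} [Monoid A] {Φ : A → A} {S₁ S₂ : Set A}

lemma map_sandwich (h : MonoIndep Φ (fun t : Fin 2 => if t = 0 then S₁ else S₂)) {x y z : A}
    (hx : x ∈ S₁) (hy : y ∈ S₂) (hz : z ∈ S₁) (a b : A) :
    Φ (a * x * y * z * b) = Φ (a * x * Φ y * z * b) :=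
  (h.1 0 1 0 (by decide) (by decide) x hx y hy z hz).1 a b

lemma map_mul_mul (h : MonoIndep Φ (fun t : Fin 2 => if t = 0 then S₁ else S₂)) {y x y' : A}
    (hy : y ∈ S₂) (hx : x ∈ S₁) (hy' : y' ∈ S₂) :
    Φ (y * x * y') = Φ y * Φ x * Φ y' := by
  have hV : VShaped ![(1 : Fin 2), 0, 1] := ⟨1, by decide, by decide⟩
  have := h.2 2 _ hV ![y, x, y'] (by intro r; fin_cases r <;> simpa)
  simpa [List.ofFn_succ, mul_assoc] using this

lemma map_geom_term {σ : Type*} [SetLike σ A] [SubmonoidClass σ A] {S₁ : σ}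
    (h : MonoIndep Φ (fun t : Fin 2 => if t = 0 then (S₁ : Set A) else S₂)) {x u : A}
    (hx : x ∈ S₁) (hu : u ∈ S₂) (hw : Φ u ∈ S₁) (hfix : Φ (Φ u) = Φ u)
    (hbimod : ∀ c, Φ (Φ u * c * Φ u) = Φ u * Φ c * Φ u) (n : ℕ) :
    Φ ((u * x) ^ n * u) = Φ ((Φ u * x) ^ n * Φ u) := by
  set w := Φ u
  cases n with
  | zero => simpa using hfix.symm
  | succ m =>
    have hc : (x * w) ^ m * x ∈ S₁ := mul_mem (pow_mem (mul_mem hx hw) m) hx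
    calc Φ ((u * x) ^ (m + 1) * u) = Φ (u * (x * u) ^ (m + 1)) := by rw [mul_pow_mul]
      _ = Φ (u * ((x * w) ^ m * (x * u))) :=
          map_mul_pow_succ_eq Φ (fun a b => h.map_sandwich hx hu hx a b) m u
      _ = Φ (u * ((x * w) ^ m * x) * u) := by simp only [mul_assoc]
      _ = w * Φ ((x * w) ^ m * x) * w := h.map_mul_mul hu hc hu
      _ = Φ (w * ((x * w) ^ m * x) * w) := (hbimod _).symm
      _ = Φ ((w * x) ^ (m + 1) * w) := by
          rw [mul_pow_mul w x, pow_succ]; simp only [mul_assoc]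

end MonoIndep

theorem hTrans_comp_general {A : Type*} [CStarAlgebra A] [PartialOrder A] [StarOrderedRing A]
    (B : StarSubalgebra ℂ A)
    (Φ : A →ₗ[ℂ] A)
    (hmem : ∀ x : A, Φ x ∈ B)
    (hfix : ∀ b ∈ B, Φ b = b)
    (hbimod : ∀ b₁ ∈ B, ∀ b₂ ∈ B, ∀ x : A, Φ (b₁ * x * b₂) = b₁ * Φ x * b₂)
    (hpos : ∀ a : A, 0 ≤ Φ (star a * a))
    (X Y : A)
    (hindep : MonoIndep (fun x => Φ x)
      (fun t : Fin 2 =>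
        if t = 0 then
          ((Algebra.adjoin ℂ ({X} ∪ (B : Set A))).topologicalClosure : Set A)
        else
          ((Algebra.adjoin ℂ ({Y} ∪ (B : Set A))).topologicalClosure : Set A))) :
    ∃ ε > (0 : ℝ), ∀ z ∈ B, ‖z‖ < ε →
      IsUnit (1 - z * (X + Y)) ∧ IsUnit (1 - z * Y) ∧
      IsUnit (1 - hTrans Φ Y z * X) ∧
      hTrans Φ (X + Y) z = hTrans Φ X (hTrans Φ Y z) := by
  have hΦpos (a : A) (ha : 0 ≤ a) : 0 ≤ Φ a := by
    obtain ⟨b, rfl⟩ := CStarAlgebra.nonneg_iff_eq_star_mul_self.1 ha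
    exact hpos b
  have hΦcont : Continuous Φ := map_continuous (PositiveLinearMap.mk₀ Φ hΦpos)
  set u : A → A := fun z => Ring.inverse (1 - z * Y) * z
  have hu : Tendsto u (𝓝 0) (𝓝 0) := tendsto_inverse_one_sub_mul_mul Y
  obtain ⟨ε, hε, hsmall⟩ := Metric.eventually_nhds_iff.1 <|
    (eventually_norm_mul_lt_one tendsto_id Y).and <| (eventually_norm_mul_lt_one hu X).and <|
      eventually_norm_mul_lt_one ((hΦcont.tendsto' 0 0 (map_zero Φ)).comp hu) X
  refine ⟨ε, hε, fun z hzB hz => ?_⟩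
  obtain ⟨hzY, huX, hwX⟩ : ‖z * Y‖ < 1 ∧ ‖u z * X‖ < 1 ∧ ‖Φ (u z) * X‖ < 1 :=
    hsmall (by simpa using hz)
  have hzY' := isUnit_one_sub_of_norm_lt_one hzY
  have hu_eq : (1 - z * Y) * u z = z := by
    simp only [u, ← mul_assoc, Ring.mul_inverse_cancel _ hzY', one_mul]
  have hclosure {W b : A} (hb : b ∈ B) :
      b ∈ (Algebra.adjoin ℂ ({W} ∪ (B : Set A))).topologicalClosure :=
    Subalgebra.le_topologicalClosure _ (Algebra.subset_adjoin (.inr hb))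
  have hgen (W : A) : W ∈ (Algebra.adjoin ℂ ({W} ∪ (B : Set A))).topologicalClosure :=
    Subalgebra.le_topologicalClosure _ (Algebra.subset_adjoin (.inl rfl))
  have hu_mem : u z ∈ (Algebra.adjoin ℂ ({Y} ∪ (B : Set A))).topologicalClosure :=
    mul_mem (inverse_one_sub_mem (Subalgebra.isClosed_topologicalClosure _)
      (mul_mem (hclosure hzB) (hgen Y)) hzY) (hclosure hzB)
  have hgeom := hindep.map_geom_term (hgen X) hu_mem (hclosure (hmem _)) (hfix _ (hmem _))
    (fun c => hbimod _ (hmem _) _ (hmem _) c)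
  refine ⟨one_sub_mul_add_eq_mul hu_eq ▸ hzY'.mul (isUnit_one_sub_of_norm_lt_one huX), hzY',
    isUnit_one_sub_of_norm_lt_one hwX, ?_⟩
  change Φ (Ring.inverse (1 - z * (X + Y)) * z) = Φ (Ring.inverse (1 - Φ (u z) * X) * Φ (u z))
  rw [inverse_one_sub_mul_add_mul_eq hzY' hu_eq]
  exact map_inverse_one_sub_mul_mul_eq Φ hΦcont huX hwX hgeom

/-- Theorem 3.2: if `X` and `Y` are monotonically independent over `𝔅`
(the norm-closed subalgebras generated by `{X} ∪ 𝔅` resp. `{Y} ∪ 𝔅`, with index `1 < 2`),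
then `𝔥_{X+Y} = 𝔥_X ∘ 𝔥_Y` in a neighborhood of `0 ∈ 𝔅`. -/
theorem hTrans_comp {A : Type*} [CStarAlgebra A] [PartialOrder A] [StarOrderedRing A]
    (B : StarSubalgebra ℂ A) (hBclosed : IsClosed (B : Set A))
    (Φ : A →ₗ[ℂ] A)
    (hmem : ∀ x : A, Φ x ∈ B)
    (hfix : ∀ b ∈ B, Φ b = b)
    (hbimod : ∀ b₁ ∈ B, ∀ b₂ ∈ B, ∀ x : A, Φ (b₁ * x * b₂) = b₁ * Φ x * b₂)
    (hpos : ∀ a : A, 0 ≤ Φ (star a * a))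
    (X Y : A)
    (hindep : MonoIndep (fun x => Φ x)
      (fun t : Fin 2 =>
        if t = 0 then
          ((Algebra.adjoin ℂ ({X} ∪ (B : Set A))).topologicalClosure : Set A)
        else
          ((Algebra.adjoin ℂ ({Y} ∪ (B : Set A))).topologicalClosure : Set A))) :
    ∃ ε > (0 : ℝ), ∀ z ∈ B, ‖z‖ < ε →
      IsUnit (1 - z * (X + Y)) ∧ IsUnit (1 - z * Y) ∧
      IsUnit (1 - hTrans Φ Y z * X) ∧
      hTrans Φ (X + Y) z = hTrans Φ X (hTrans Φ Y z) :=
  hTrans_comp_general B Φ hmem hfix hbimod hpos X Y hindep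
end

section
/- Let 𝔄 be a unital C*-algebra, 𝔅 ⊆ 𝔄 a unital C*-subalgebra containing the unit of 𝔄, and Φ : 𝔄 → 𝔅 a positive conditional expectation. Let U, V ∈ 𝔄 be such that U − 1 and V are monotonically independent over 𝔅 (the closed subalgebra generated by {U − 1} ∪ 𝔅 carrying index 1 and that generated by {V} ∪ 𝔅 carrying index 2). For W ∈ 𝔄 and z ∈ 𝔅 small define ϑ_W(z) = Φ((1 − zW)⁻¹ zW) and κ_W(z) = (1 + ϑ_W(z))⁻¹ ϑ_W(z). Then there exists ε > 0 such that for all z ∈ 𝔅 with ‖z‖ < ε all the relevant inverses exist and ϑ_{VU}(z) = ϑ_U(κ_V(z)). -/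
open scoped BigOperators

/-- `ϑ_W(z) = Φ((1 - zW)⁻¹ zW)`. -/
noncomputable def thetaTrans {A : Type*} [Ring A] [Algebra ℂ A]
    (Φ : A →ₗ[ℂ] A) (W z : A) : A :=
  Φ (Ring.inverse (1 - z * W) * (z * W))

/-- `κ_W(z) = (1 + ϑ_W(z))⁻¹ ϑ_W(z)`. -/
noncomputable def kappaTrans {A : Type*} [Ring A] [Algebra ℂ A]
    (Φ : A →ₗ[ℂ] A) (W z : A) : A :=
  Ring.inverse (1 + thetaTrans Φ W z) * thetaTrans Φ W z

/-!
Write `u = U - 1`, `c = zV` and `s = (1 - c)⁻¹ c`, so that `1 + s = (1 - c)⁻¹`, `(1 + s)⁻¹ s = c`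
and `ϑ_V(z) = Φ s`. The identity `(1 + t)⁻¹ (1 - t u) = 1 - (1 + t)⁻¹ t U`, used for `t = s` and
for `t = Φ s`, expands both resolvents as geometric series:
`(1 - zVU)⁻¹ = ∑ (s u)ⁿ (1 + s)` and `(1 - κ_V(z) U)⁻¹ = ∑ (Φ(s) u)ⁿ (1 + Φ s)`.
Monotone independence makes `Φ` agree on the terms: condition (a) replaces every inner `s` by
`Φ s`, condition (b) factorizes what is left, `s · u (Φ(s) u)ⁿ⁻¹ · (1 + s)`, and the bimodule
property of `Φ` reassembles the factors into `Φ ((Φ(s) u)ⁿ (1 + Φ s))`.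
A positive map on a C⋆-algebra is continuous, so `Φ` commutes with the sums, and every series
converges for `z` close to `0`.
-/

open Filter Topology
open scoped Ring

section MonoIndep

variable {A I : Type*} [Monoid A] [LinearOrder I] {Φ : A → A} {S : I → Set A} {i j : I}

theorem MonoIndep.map_mul_mul_pow_mul (h : MonoIndep Φ S) (hij : i < j) {x y : A}
    (hx : x ∈ S i) (hy : y ∈ S j) (n : ℕ) (a b : A) :
    Φ (a * x * (y * x) ^ n * b) = Φ (a * x * (Φ y * x) ^ n * b) := by
  induction n generalizing a with
  | zero => simp only [pow_zero]
  | succ n ih =>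
    have hstep := (h.1 i j i hij hij x hx y hy x hx).1 a ((y * x) ^ n * b)
    have ih' := ih (a * x * Φ y)
    simp only [pow_succ', mul_assoc] at hstep ih' ⊢
    rw [hstep, ih']

theorem VShaped.of_lt (hij : i < j) : VShaped ![j, i, j] := by
  refine ⟨1, ?_, ?_⟩ <;> intro r s <;> fin_cases r <;> fin_cases s <;> simp [hij]

theorem MonoIndep.map_mul_mul_s2 (h : MonoIndep Φ S) (hij : i < j) {x y z : A}
    (hx : x ∈ S j) (hy : y ∈ S i) (hz : z ∈ S j) :
    Φ (x * y * z) = Φ x * Φ y * Φ z := by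
  have := h.2 2 ![j, i, j] (VShaped.of_lt hij) ![x, y, z] (by
    intro r; fin_cases r <;> assumption)
  simpa [List.ofFn_succ, mul_assoc] using this

end MonoIndep

section RingInverse

variable {R : Type*} [Ring R]

theorem Ring.inverse_one_sub_mul_self {x : R} (h : IsUnit (1 - x)) :
    (1 - x)⁻¹ʳ * x = (1 - x)⁻¹ʳ - 1 := by
  calc (1 - x)⁻¹ʳ * x = (1 - x)⁻¹ʳ - (1 - x)⁻¹ʳ * (1 - x) := by noncomm_ring
    _ = (1 - x)⁻¹ʳ - 1 := by rw [Ring.inverse_mul_cancel _ h]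

theorem Ring.inverse_one_add_mul_one_sub_mul_sub_one {t : R} (ht : IsUnit (1 + t)) (U : R) :
    (1 + t)⁻¹ʳ * (1 - t * (U - 1)) = 1 - (1 + t)⁻¹ʳ * t * U := by
  calc (1 + t)⁻¹ʳ * (1 - t * (U - 1)) = (1 + t)⁻¹ʳ * (1 + t) - (1 + t)⁻¹ʳ * t * U := by
        noncomm_ring
    _ = 1 - (1 + t)⁻¹ʳ * t * U := by rw [Ring.inverse_mul_cancel _ ht]

theorem Ring.one_add_inverse_one_sub_mul {c : R} (hc : IsUnit (1 - c)) :
    1 + (1 - c)⁻¹ʳ * c = (1 - c)⁻¹ʳ := by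
  rw [Ring.inverse_one_sub_mul_self hc, add_sub_cancel]

theorem Ring.inverse_one_add_inverse_one_sub_mul {c : R} (hc : IsUnit (1 - c)) :
    (1 + (1 - c)⁻¹ʳ * c)⁻¹ʳ * ((1 - c)⁻¹ʳ * c) = c := by
  rw [Ring.one_add_inverse_one_sub_mul hc, Ring.inverse_inverse hc,
    Ring.mul_inverse_cancel_left _ _ hc]

end RingInverse

section NormedRing

variable {R : Type*} [NormedRing R] [HasSummableGeomSeries R]

theorem ring_inverse_one_sub_mem {S : Type*} [SetLike S R] [SubsemiringClass S R] {s : S}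
    (hs : IsClosed (s : Set R)) {x : R} (hx : x ∈ s) (h : ‖x‖ < 1) : (1 - x)⁻¹ʳ ∈ s :=
  hs.mem_of_tendsto (hasSum_geom_series_inverse x h).tendsto_sum_nat
    (.of_forall fun _ => sum_mem fun k _ => pow_mem hx k)

theorem isUnit_one_sub_inverse_one_add_mul_mul {t U : R} (ht : IsUnit (1 + t))
    (htU : ‖t * (U - 1)‖ < 1) : IsUnit (1 - (1 + t)⁻¹ʳ * t * U) := by
  rw [← Ring.inverse_one_add_mul_one_sub_mul_sub_one ht]
  exact ht.ringInverse.mul (isUnit_one_sub_of_norm_lt_one htU)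

theorem hasSum_pow_mul_one_add {t U : R} (ht : IsUnit (1 + t)) (htU : ‖t * (U - 1)‖ < 1) :
    HasSum (fun n => (t * (U - 1)) ^ n * (1 + t)) (1 - (1 + t)⁻¹ʳ * t * U)⁻¹ʳ := by
  rw [← Ring.inverse_one_add_mul_one_sub_mul_sub_one ht, Ring.inverse_mul (.inl ht.ringInverse),
    Ring.inverse_inverse ht]
  exact (hasSum_geom_series_inverse _ htU).mul_right _

theorem tendsto_inverse_one_sub_mul_mul_nhds_zero (V : R) :
    Tendsto (fun z => (1 - z * V)⁻¹ʳ * (z * V)) (𝓝 0) (𝓝 0) := by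
  have hc : Tendsto (fun z : R => z * V) (𝓝 0) (𝓝 0) := by
    simpa using (continuous_mul_const V).tendsto 0
  have hd : Tendsto (fun z : R => 1 - z * V) (𝓝 0) (𝓝 ((1 : Rˣ) : R)) := by
    simpa using hc.const_sub 1
  have hr : Tendsto (fun z : R => (1 - z * V)⁻¹ʳ) (𝓝 0) (𝓝 1) := by
    simpa [Function.comp_def] using (NormedRing.inverse_continuousAt (1 : Rˣ)).tendsto.comp hd
  simpa using hr.mul hc

end NormedRing

theorem LinearMap.continuous_of_map_star_mul_self_nonneg {A₁ A₂ : Type*}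
    [NonUnitalCStarAlgebra A₁] [PartialOrder A₁] [StarOrderedRing A₁]
    [NonUnitalCStarAlgebra A₂] [PartialOrder A₂] [StarOrderedRing A₂]
    (Φ : A₁ →ₗ[ℂ] A₂) (hpos : ∀ a, 0 ≤ Φ (star a * a)) : Continuous Φ :=
  map_continuous <| PositiveLinearMap.mk₀ Φ fun x hx => by
    obtain ⟨a, rfl⟩ := CStarAlgebra.nonneg_iff_eq_star_mul_self.1 hx
    exact hpos a

section ConditionalExpectation

variable {A : Type*} [Ring A] [Algebra ℂ A]

structure IsConditionalExpectation (Φ : A →ₗ[ℂ] A) (B : Subalgebra ℂ A) : Prop where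
  map_mem : ∀ x, Φ x ∈ B
  map_of_mem : ∀ b ∈ B, Φ b = b
  map_mul_mul_s2 : ∀ b₁ ∈ B, ∀ b₂ ∈ B, ∀ x, Φ (b₁ * x * b₂) = b₁ * Φ x * b₂

variable {B T₀ T₁ : Subalgebra ℂ A} {Φ : A →ₗ[ℂ] A}

theorem IsConditionalExpectation.map_one (hΦ : IsConditionalExpectation Φ B) : Φ 1 = 1 :=
  hΦ.map_of_mem 1 (one_mem B)

theorem IsConditionalExpectation.thetaTrans_eq (hΦ : IsConditionalExpectation Φ B) {W z : A}
    (h : IsUnit (1 - z * W)) : thetaTrans Φ W z = Φ (1 - z * W)⁻¹ʳ - 1 := by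
  rw [thetaTrans, Ring.inverse_one_sub_mul_self h, map_sub, hΦ.map_one]

theorem IsConditionalExpectation.map_pow_mul_one_add (hΦ : IsConditionalExpectation Φ B)
    (hindep : MonoIndep (fun x => Φ x) (fun t : Fin 2 => if t = 0 then (T₀ : Set A) else T₁))
    (hB₀ : B ≤ T₀) {u s : A} (hu : u ∈ T₀) (hs : s ∈ T₁) (n : ℕ) :
    Φ ((s * u) ^ n * (1 + s)) = Φ ((Φ s * u) ^ n * (1 + Φ s)) := by
  have hθ : Φ s ∈ B := hΦ.map_mem s
  have hθ1 : 1 + Φ s ∈ B := add_mem (one_mem B) hθ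
  have hΦs1 : Φ (1 + s) = 1 + Φ s := by rw [map_add, hΦ.map_one]
  cases n with
  | zero => simp only [pow_zero, one_mul, hΦs1, hΦ.map_of_mem _ hθ1]
  | succ n =>
    set M := u * (Φ s * u) ^ n
    have hM : M ∈ T₀ :=
      mul_mem hu (pow_mem (mul_mem (hB₀ hθ) hu) n)
    calc Φ ((s * u) ^ (n + 1) * (1 + s)) = Φ (s * M * (1 + s)) := by
          rw [pow_succ', ← mul_assoc, hindep.map_mul_mul_pow_mul zero_lt_one hu hs, mul_assoc s]
      _ = Φ s * Φ M * (1 + Φ s) := by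
          rw [hindep.map_mul_mul_s2 zero_lt_one hs hM (add_mem (one_mem T₁) hs),
            hΦs1]
      _ = Φ ((Φ s * u) ^ (n + 1) * (1 + Φ s)) := by
          rw [← hΦ.map_mul_mul_s2 _ hθ _ hθ1, pow_succ', mul_assoc (Φ s) u]

end ConditionalExpectation

section NormedConditionalExpectation

variable {A : Type*} [NormedRing A] [NormedAlgebra ℂ A] [HasSummableGeomSeries A]
  {B T₀ T₁ : Subalgebra ℂ A} {Φ : A →ₗ[ℂ] A}

theorem IsConditionalExpectation.map_inverse_eq (hΦ : IsConditionalExpectation Φ B)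
    (hindep : MonoIndep (fun x => Φ x) (fun t : Fin 2 => if t = 0 then (T₀ : Set A) else T₁))
    (hB₀ : B ≤ T₀) (hcont : Continuous Φ) {U s : A} (hU : U - 1 ∈ T₀) (hs : s ∈ T₁)
    (hs1 : IsUnit (1 + s)) (hθ1 : IsUnit (1 + Φ s)) (hsU : ‖s * (U - 1)‖ < 1)
    (hθU : ‖Φ s * (U - 1)‖ < 1) :
    Φ (1 - (1 + s)⁻¹ʳ * s * U)⁻¹ʳ = Φ (1 - (1 + Φ s)⁻¹ʳ * Φ s * U)⁻¹ʳ := by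
  refine ((hasSum_pow_mul_one_add hs1 hsU).map Φ hcont).unique ?_
  convert (hasSum_pow_mul_one_add hθ1 hθU).map Φ hcont using 1
  funext n
  exact hΦ.map_pow_mul_one_add hindep hB₀ hU hs n

theorem IsConditionalExpectation.thetaTrans_mul_eq (hΦ : IsConditionalExpectation Φ B)
    (hindep : MonoIndep (fun x => Φ x) (fun t : Fin 2 => if t = 0 then (T₀ : Set A) else T₁))
    (hB₀ : B ≤ T₀) (hT₁ : IsClosed (T₁ : Set A)) (hcont : Continuous Φ) {U V z : A}
    (hU : U - 1 ∈ T₀) (hzV : z * V ∈ T₁) (hc : ‖z * V‖ < 1)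
    (hsU : ‖(1 - z * V)⁻¹ʳ * (z * V) * (U - 1)‖ < 1) (hθ : ‖thetaTrans Φ V z‖ < 1)
    (hθU : ‖thetaTrans Φ V z * (U - 1)‖ < 1) :
    IsUnit (1 - z * (V * U)) ∧ IsUnit (1 - z * V) ∧
      IsUnit (1 + thetaTrans Φ V z) ∧ IsUnit (1 - kappaTrans Φ V z * U) ∧
      thetaTrans Φ (V * U) z = thetaTrans Φ U (kappaTrans Φ V z) := by
  have hc1 : IsUnit (1 - z * V) := isUnit_one_sub_of_norm_lt_one hc
  set s := (1 - z * V)⁻¹ʳ * (z * V)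
  have hs : s ∈ T₁ := mul_mem (ring_inverse_one_sub_mem hT₁ hzV hc) hzV
  have hs1 : IsUnit (1 + s) := Ring.one_add_inverse_one_sub_mul hc1 ▸ hc1.ringInverse
  have hθ1 : IsUnit (1 + thetaTrans Φ V z) := by
    simpa using isUnit_one_sub_of_norm_lt_one (x := -thetaTrans Φ V z) (by rwa [norm_neg])
  have hVU : 1 - z * (V * U) = 1 - (1 + s)⁻¹ʳ * s * U := by
    rw [Ring.inverse_one_add_inverse_one_sub_mul hc1, mul_assoc]
  have hVU1 : IsUnit (1 - z * (V * U)) := hVU ▸ isUnit_one_sub_inverse_one_add_mul_mul hs1 hsU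
  have hκU1 : IsUnit (1 - kappaTrans Φ V z * U) :=
    isUnit_one_sub_inverse_one_add_mul_mul hθ1 hθU
  refine ⟨hVU1, hc1, hθ1, hκU1, ?_⟩
  rw [hΦ.thetaTrans_eq hVU1, hΦ.thetaTrans_eq hκU1, hVU,
    hΦ.map_inverse_eq hindep hB₀ hcont hU hs hs1 hθ1 hsU hθU]
  rfl

theorem eventually_norm_lt_one_of_continuous (hcont : Continuous Φ) (U V : A) :
    ∀ᶠ z in 𝓝 (0 : A), ‖z * V‖ < 1 ∧ ‖(1 - z * V)⁻¹ʳ * (z * V) * (U - 1)‖ < 1 ∧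
      ‖thetaTrans Φ V z‖ < 1 ∧ ‖thetaTrans Φ V z * (U - 1)‖ < 1 := by
  have small {f : A → A} (hf : Tendsto f (𝓝 0) (𝓝 0)) : ∀ᶠ z in 𝓝 0, ‖f z‖ < 1 := by
    simpa using hf.eventually (eventually_norm_sub_lt 0 one_pos)
  have hs0 := tendsto_inverse_one_sub_mul_mul_nhds_zero V
  have hθ0 : Tendsto (thetaTrans Φ V) (𝓝 0) (𝓝 0) := by
    have := (hcont.tendsto 0).comp hs0
    rwa [map_zero] at this
  filter_upwards [small (by simpa using (continuous_mul_const V).tendsto 0),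
    small (by simpa using hs0.mul_const (U - 1)), small hθ0,
    small (by simpa using hθ0.mul_const (U - 1))] with z h₁ h₂ h₃ h₄
  exact ⟨h₁, h₂, h₃, h₄⟩

end NormedConditionalExpectation

theorem thetaTrans_comp_general {A : Type*} [CStarAlgebra A] [PartialOrder A] [StarOrderedRing A]
    (B : StarSubalgebra ℂ A)
    (Φ : A →ₗ[ℂ] A)
    (hmem : ∀ x : A, Φ x ∈ B)
    (hfix : ∀ b ∈ B, Φ b = b)
    (hbimod : ∀ b₁ ∈ B, ∀ b₂ ∈ B, ∀ x : A, Φ (b₁ * x * b₂) = b₁ * Φ x * b₂)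
    (hpos : ∀ a : A, 0 ≤ Φ (star a * a))
    (U V : A)
    (hindep : MonoIndep (fun x => Φ x)
      (fun t : Fin 2 =>
        if t = 0 then
          ((Algebra.adjoin ℂ ({U - 1} ∪ (B : Set A))).topologicalClosure : Set A)
        else
          ((Algebra.adjoin ℂ ({V} ∪ (B : Set A))).topologicalClosure : Set A))) :
    ∃ ε > (0 : ℝ), ∀ z ∈ B, ‖z‖ < ε →
      IsUnit (1 - z * (V * U)) ∧ IsUnit (1 - z * V) ∧
      IsUnit (1 + thetaTrans Φ V z) ∧ IsUnit (1 - kappaTrans Φ V z * U) ∧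
      thetaTrans Φ (V * U) z = thetaTrans Φ U (kappaTrans Φ V z) := by
  have hΦ : IsConditionalExpectation Φ B.toSubalgebra := ⟨hmem, hfix, hbimod⟩
  have hcont : Continuous Φ := Φ.continuous_of_map_star_mul_self_nonneg hpos
  set T₀ := (Algebra.adjoin ℂ ({U - 1} ∪ (B : Set A))).topologicalClosure
  set T₁ := (Algebra.adjoin ℂ ({V} ∪ (B : Set A))).topologicalClosure
  have hB₀ : B.toSubalgebra ≤ T₀ := fun _ hb =>
    Subalgebra.le_topologicalClosure _ (Algebra.subset_adjoin (Or.inr hb))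
  have hU : U - 1 ∈ T₀ := Subalgebra.le_topologicalClosure _ (Algebra.subset_adjoin (Or.inl rfl))
  obtain ⟨ε, hε, hsmall⟩ :=
    Metric.eventually_nhds_iff.1 (eventually_norm_lt_one_of_continuous hcont U V)
  refine ⟨ε, hε, fun z hzB hz => ?_⟩
  have hzV : z * V ∈ T₁ :=
    mul_mem (Subalgebra.le_topologicalClosure _ (Algebra.subset_adjoin (Or.inr hzB)))
      (Subalgebra.le_topologicalClosure _ (Algebra.subset_adjoin (Or.inl rfl)))
  obtain ⟨hc, hsU, hθ, hθU⟩ := hsmall (by simpa using hz)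
  exact hΦ.thetaTrans_mul_eq hindep hB₀ (Subalgebra.isClosed_topologicalClosure _) hcont hU hzV
    hc hsU hθ hθU

/-- key identity in the proof of Theorem 3.4: if `U - 1` and `V` are
monotonically independent over `𝔅`, then `ϑ_{VU}(z) = ϑ_U(κ_V(z))` for `z` near `0 ∈ 𝔅`. -/
theorem thetaTrans_comp {A : Type*} [CStarAlgebra A] [PartialOrder A] [StarOrderedRing A]
    (B : StarSubalgebra ℂ A) (hBclosed : IsClosed (B : Set A))
    (Φ : A →ₗ[ℂ] A)
    (hmem : ∀ x : A, Φ x ∈ B)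
    (hfix : ∀ b ∈ B, Φ b = b)
    (hbimod : ∀ b₁ ∈ B, ∀ b₂ ∈ B, ∀ x : A, Φ (b₁ * x * b₂) = b₁ * Φ x * b₂)
    (hpos : ∀ a : A, 0 ≤ Φ (star a * a))
    (U V : A)
    (hindep : MonoIndep (fun x => Φ x)
      (fun t : Fin 2 =>
        if t = 0 then
          ((Algebra.adjoin ℂ ({U - 1} ∪ (B : Set A))).topologicalClosure : Set A)
        else
          ((Algebra.adjoin ℂ ({V} ∪ (B : Set A))).topologicalClosure : Set A))) :
    ∃ ε > (0 : ℝ), ∀ z ∈ B, ‖z‖ < ε →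
      IsUnit (1 - z * (V * U)) ∧ IsUnit (1 - z * V) ∧
      IsUnit (1 + thetaTrans Φ V z) ∧ IsUnit (1 - kappaTrans Φ V z * U) ∧
      thetaTrans Φ (V * U) z = thetaTrans Φ U (kappaTrans Φ V z) :=
  thetaTrans_comp_general B Φ hmem hfix hbimod hpos U V hindep
end

section
/- Let 𝔄 be a *-algebra containing the unital C*-algebra 𝔅 as a *-subalgebra, and Φ : 𝔄 → 𝔅 a conditional expectation. Let (X_n)_{n≥1} be selfadjoint elements of 𝔄 such that: (1) the family (X_n) is monotonically independent over 𝔅 (the subalgebras generated by {X_n} ∪ 𝔅 indexed by n with the natural order); (2) the X_n have identical moment functions: Φ(X_i b₁ X_i ⋯ b_{r−1} X_i) = Φ(X_j b₁ X_j ⋯ b_{r−1} X_j) for all i, j, r ≥ 1 and b₁,…,b_{r−1} ∈ 𝔅; (3) Φ(X_k) = 0 for all k. Set S_N = (X₁ + ⋯ + X_N)/√N. Then for every odd m ≥ 1 and all b₁,…,b_{m−1} ∈ 𝔅: lim_{N→∞} Φ(S_N b₁ S_N b₂ ⋯ b_{m−1} S_N) = 0 in the norm of 𝔅. -/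
/-!
Expanding `S_N` multilinearly, the `m`-th moment is `N^{-m/2}` times a sum, over index tuples
`j : Fin m → Fin N`, of `Φ (X_{j₁} b₁ X_{j₂} ⋯ b_{m-1} X_{j_m})`. A word whose indices are not
all equal contains a run of equal indices `M` next to a smaller index; monotone independence
replaces the run by its conditional expectation, which is absorbed into a neighbouring
coefficient. Induction on the length then shows that the value of a word vanishes as soon as
some index occurs exactly once (the `X_n` are centred), and that it depends only on the relative
order of the indices (the `X_n` are identically distributed), so it takes finitely many values.
For odd `m = 2h + 1`, a tuple without singletons takes at most `h` distinct values, so at most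
`h^m N^h` tuples contribute and the moment is `O(N^{-1/2})`.
-/

open scoped BigOperators

/-- The moment word `x b₁ x b₂ ⋯ b_{m-1} x` (with `m` factors `x`); applying the
conditional expectation gives the `m`-th moment `m_{x,m}(b₁, …, b_{m-1})`. -/
def momWord {A : Type*} [Ring A] (x : A) (b : ℕ → A) (m : ℕ) : A :=
  (List.ofFn fun u : Fin (m - 1) => x * b u.1).prod * x

namespace MonoIndep

variable {A I : Type*} [Monoid A] [LinearOrder I] {Ψ : A → A} {S : I → Set A}

theorem apply_mul_mul_of_lt_left (h : MonoIndep Ψ S) {i j : I} (hij : i < j)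
    (h1 : (1 : A) ∈ S i) {x y : A} (hx : x ∈ S i) (hy : y ∈ S j) (a b : A) :
    Ψ (a * x * y * b) = Ψ (a * x * Ψ y * b) := by
  simpa only [mul_one] using (h.1 i j i hij hij x hx y hy 1 h1).1 a b

theorem apply_mul_mul_of_lt_right (h : MonoIndep Ψ S) {i j : I} (hij : i < j)
    (h1 : (1 : A) ∈ S i) {x y : A} (hx : x ∈ S i) (hy : y ∈ S j) (a b : A) :
    Ψ (a * y * x * b) = Ψ (a * Ψ y * x * b) := by
  simpa only [mul_one] using (h.1 i j i hij hij 1 h1 y hy x hx).1 a b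

end MonoIndep

theorem List.exists_plateau_split {I α : Type*} [LinearOrder I] (L : List (I × α))
    (hL : L ≠ []) :
    ∃ (M : I) (cs : List α), cs ≠ [] ∧
      (L = cs.map (Prod.mk M) ∨
        (∃ P v a Q, v < M ∧ L = P ++ (v, a) :: (cs.map (Prod.mk M) ++ Q)) ∨
        (∃ k a Q, k < M ∧ L = cs.map (Prod.mk M) ++ (k, a) :: Q)) := by
  induction L with
  | nil => exact absurd rfl hL
  | cons p L ih =>
    obtain ⟨n, a⟩ := p
    rcases eq_or_ne L [] with rfl | hL'
    · exact ⟨n, [a], by simp, Or.inl rfl⟩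
    obtain ⟨M, cs, hcs, hsplit⟩ := ih hL'
    obtain ⟨c, cs', rfl⟩ := List.exists_cons_of_ne_nil hcs
    rcases hsplit with rfl | ⟨P, v, b, Q, hv, rfl⟩ | ⟨k, b, Q, hk, rfl⟩
    · rcases lt_trichotomy n M with hlt | rfl | hgt
      · exact ⟨M, c :: cs', hcs, Or.inr (Or.inl ⟨[], n, a, [], hlt, by simp⟩)⟩
      · exact ⟨n, a :: c :: cs', by simp, Or.inl rfl⟩
      · exact ⟨n, [a], by simp, Or.inr (Or.inr ⟨M, c, cs'.map (Prod.mk M), hgt, rfl⟩)⟩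
    · exact ⟨M, c :: cs', hcs, Or.inr (Or.inl ⟨(n, a) :: P, v, b, Q, hv, rfl⟩)⟩
    · rcases lt_trichotomy n M with hlt | rfl | hgt
      · exact ⟨M, c :: cs', hcs, Or.inr (Or.inl ⟨[], n, a, (k, b) :: Q, hlt, rfl⟩)⟩
      · exact ⟨n, a :: c :: cs', by simp, Or.inr (Or.inr ⟨k, b, Q, hk, rfl⟩)⟩
      · exact ⟨n, [a], by simp,
          Or.inr (Or.inr ⟨M, c, cs'.map (Prod.mk M) ++ (k, b) :: Q, hgt, rfl⟩)⟩

open Finset in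
theorem List.count_ofFn_eq_card_filter {α : Type*} [DecidableEq α] {n : ℕ} (f : Fin n → α)
    (a : α) : (List.ofFn f).count a = #{i | f i = a} := by
  simpa using (Fin.card_filter_univ_eq_vector_get_eq_count a (List.Vector.ofFn f)).symm

section Words

variable {A B I : Type*} [Ring A] [Ring B] (ι : B →+* A) (X : I → A)

def word (L : List (I × B)) : A :=
  (L.map fun p => X p.1 * ι p.2).prod

@[simp]
theorem word_nil : word ι X [] = 1 := rfl

@[simp]
theorem word_cons (p : I × B) (L : List (I × B)) :
    word ι X (p :: L) = X p.1 * ι p.2 * word ι X L := by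
  simp [word]

@[simp]
theorem word_append (L L' : List (I × B)) :
    word ι X (L ++ L') = word ι X L * word ι X L' := by
  simp [word]

theorem word_map_mk (M : I) (cs : List B) :
    word ι X (cs.map (Prod.mk M)) = (cs.map fun b => X M * ι b).prod := by
  simp [word, Function.comp_def]

theorem word_map_mk_mem {S : Submonoid A} {M : I} (hX : X M ∈ S) (hι : ∀ b, ι b ∈ S)
    (cs : List B) : word ι X (cs.map (Prod.mk M)) ∈ S := by
  rw [word_map_mk]
  exact list_prod_mem fun y hy => by
    obtain ⟨b, -, rfl⟩ := List.mem_map.1 hy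
    exact mul_mem hX (hι b)

theorem prod_map_mul_mul_eq_momWord (x : A) (cs : List B) :
    (cs.map fun b => x * ι b).prod * x = momWord x (fun t => ι (cs.getD t 0)) (cs.length + 1) := by
  rw [momWord, Nat.add_sub_cancel]
  congr 2
  exact List.ext_getElem (by simp) fun _ _ _ => by simp

end Words

section Moments

variable {A B I : Type*} [Ring A] [Ring B] {ι : B →+* A} {Φ : A → B} {X : I → A}
  (hbimod : ∀ (c₁ c₂ : B) (x : A), Φ (ι c₁ * x * ι c₂) = c₁ * Φ x * c₂)

include hbimod

theorem phi_zero : Φ 0 = 0 := by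
  simpa using hbimod 0 0 0

theorem phi_mul_right (x : A) (c : B) : Φ (x * ι c) = Φ x * c := by
  simpa using hbimod 1 c x

theorem phi_mul_left (c : B) (x : A) : Φ (ι c * x) = c * Φ x := by
  simpa using hbimod c 1 x

theorem phi_word_map_mk_eq
    (hmom : ∀ (i j : I) (r : ℕ), 1 ≤ r → ∀ c : ℕ → B,
      Φ (momWord (X i) (fun t => ι (c t)) r) = Φ (momWord (X j) (fun t => ι (c t)) r))
    (i j : I) {cs : List B} (hcs : cs ≠ []) :
    Φ (word ι X (cs.map (Prod.mk i))) = Φ (word ι X (cs.map (Prod.mk j))) := by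
  obtain ⟨cs, b, rfl⟩ := (List.eq_nil_or_concat' cs).resolve_left hcs
  rw [word_map_mk, word_map_mk]
  simp only [List.map_append, List.map_singleton, List.prod_append, List.prod_singleton,
    ← mul_assoc, prod_map_mul_mul_eq_momWord, phi_mul_right hbimod, hmom i j _ le_add_self]

end Moments

section Reduction

variable {A B I : Type*} [Ring A] [Ring B] [LinearOrder I] {ι : B →+* A} {Φ : A → B} {X : I → A}
  {S : I → Submonoid A}
  (hι : Function.Injective ι) (hindep : MonoIndep (fun x => ι (Φ x)) fun n => (S n : Set A))
  (hXS : ∀ n, X n ∈ S n) (hιS : ∀ n b, ι b ∈ S n)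

include hι hindep hXS hιS

theorem phi_word_collapse_left {v M : I} (hv : v < M) (b₀ a : B) (P Q : List (I × B))
    (cs : List B) :
    Φ (ι b₀ * word ι X (P ++ (v, a) :: (cs.map (Prod.mk M) ++ Q))) =
      Φ (ι b₀ * word ι X (P ++ (v, a * Φ (word ι X (cs.map (Prod.mk M)))) :: Q)) := by
  apply hι
  have := hindep.apply_mul_mul_of_lt_left hv (S v).one_mem (mul_mem (hXS v) (hιS v a))
    (word_map_mk_mem ι X (hXS M) (hιS M) cs) (ι b₀ * word ι X P) (word ι X Q)
  simpa only [word_append, word_cons, map_mul, mul_assoc] using this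

theorem phi_word_collapse_right {k M : I} (hk : k < M) (b₀ a : B) (Q : List (I × B))
    (cs : List B) :
    Φ (ι b₀ * word ι X (cs.map (Prod.mk M) ++ (k, a) :: Q)) =
      Φ (ι (b₀ * Φ (word ι X (cs.map (Prod.mk M)))) * word ι X ((k, a) :: Q)) := by
  apply hι
  have := hindep.apply_mul_mul_of_lt_right hk (S k).one_mem (mul_mem (hXS k) (hιS k a))
    (word_map_mk_mem ι X (hXS M) (hιS M) cs) (ι b₀) (word ι X Q)
  simpa only [word_append, word_cons, map_mul, mul_assoc] using this

variable (hbimod : ∀ (c₁ c₂ : B) (x : A), Φ (ι c₁ * x * ι c₂) = c₁ * Φ x * c₂)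

include hbimod

theorem phi_word_eq_zero_of_count_eq_one (hcent : ∀ n, Φ (X n) = 0) {v : I}
    (L : List (I × B)) (hv : (L.map Prod.fst).count v = 1) (b₀ : B) :
    Φ (ι b₀ * word ι X L) = 0 := by
  induction hn : L.length using Nat.strong_induction_on generalizing L b₀ with
  | _ n ih =>
  subst hn
  obtain ⟨M, cs, hcs, hsplit⟩ := L.exists_plateau_split (by rintro rfl; simp at hv)
  have hcs₁ : 1 ≤ cs.length := List.length_pos_iff.2 hcs
  have hμ (hlen : cs.length = 1) : Φ (word ι X (cs.map (Prod.mk M))) = 0 := by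
    obtain ⟨b, rfl⟩ := List.length_eq_one_iff.1 hlen
    simp [phi_mul_right hbimod, hcent]
  rcases hsplit with rfl | ⟨P, w, a, Q, hw, rfl⟩ | ⟨k, a, Q, hk, rfl⟩
  · simp only [List.map_map, Prod.fst_comp_mk, List.map_const, List.count_replicate,
      beq_iff_eq] at hv
    split_ifs at hv
    rw [phi_mul_left hbimod, hμ hv, mul_zero]
  · rw [phi_word_collapse_left hι hindep hXS hιS hw]
    simp only [List.map_append, List.map_cons, List.map_map, Prod.fst_comp_mk,
      List.map_const, List.count_append, List.count_cons, List.count_replicate, beq_iff_eq] at hv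
    by_cases hM : M = v
    · rw [hμ (by simp [hM] at hv; omega), mul_zero]
      simp [phi_zero hbimod]
    · refine ih _ ?_ _ ?_ _ rfl
      · simp; omega
      · simpa [List.count_cons, hM] using hv
  · rw [phi_word_collapse_right hι hindep hXS hιS hk]
    simp only [List.map_append, List.map_cons, List.map_map, Prod.fst_comp_mk,
      List.map_const, List.count_append, List.count_cons, List.count_replicate, beq_iff_eq] at hv
    by_cases hM : M = v
    · simp [hμ (by simp [hM] at hv; omega), phi_zero hbimod]
    · refine ih _ ?_ _ ?_ _ rfl
      · simp; omega
      · simpa [List.count_cons, hM] using hv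

open Finset in
theorem phi_word_ofFn_eq_zero_of_card_fiber_eq_one (hcent : ∀ n, Φ (X n) = 0) {m : ℕ}
    (j : Fin m → I) (c : Fin m → B) {v : I} (hv : #{u | j u = v} = 1) (b₀ : B) :
    Φ (ι b₀ * word ι X (List.ofFn fun u => (j u, c u))) = 0 :=
  phi_word_eq_zero_of_count_eq_one hι hindep hXS hιS hbimod hcent _
    (by rwa [List.map_ofFn, List.count_ofFn_eq_card_filter]) b₀

theorem phi_word_map_strictMono
    (hmom : ∀ (i j : I) (r : ℕ), 1 ≤ r → ∀ c : ℕ → B,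
      Φ (momWord (X i) (fun t => ι (c t)) r) = Φ (momWord (X j) (fun t => ι (c t)) r))
    {g : I → I} (hg : StrictMono g) (L : List (I × B)) (b₀ : B) :
    Φ (ι b₀ * word ι X (L.map (Prod.map g id))) = Φ (ι b₀ * word ι X L) := by
  induction hn : L.length using Nat.strong_induction_on generalizing L b₀ with
  | _ n ih =>
  subst hn
  rcases eq_or_ne L [] with rfl | hL
  · rfl
  obtain ⟨M, cs, hcs, hsplit⟩ := L.exists_plateau_split hL
  have hcs₁ : 1 ≤ cs.length := List.length_pos_iff.2 hcs
  have hmap : (cs.map (Prod.mk M)).map (Prod.map g id) = cs.map (Prod.mk (g M)) := by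
    simp [Function.comp_def]
  have hμ := phi_word_map_mk_eq hbimod hmom (g M) M hcs
  rcases hsplit with rfl | ⟨P, w, a, Q, hw, rfl⟩ | ⟨k, a, Q, hk, rfl⟩
  · rw [hmap, phi_mul_left hbimod, phi_mul_left hbimod, hμ]
  · simp only [List.map_append, List.map_cons, hmap, Prod.map_apply, id]
    rw [phi_word_collapse_left hι hindep hXS hιS (hg hw),
      phi_word_collapse_left hι hindep hXS hιS hw, hμ]
    simpa using ih _ (by simp; omega) (P ++ (w, a * Φ (word ι X (cs.map (Prod.mk M)))) :: Q) b₀ rfl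
  · simp only [List.map_append, List.map_cons, hmap, Prod.map_apply, id]
    rw [phi_word_collapse_right hι hindep hXS hιS (hg hk),
      phi_word_collapse_right hι hindep hXS hιS hk, hμ]
    simpa using ih _ (by simp; omega) ((k, a) :: Q) (b₀ * Φ (word ι X (cs.map (Prod.mk M)))) rfl

end Reduction

theorem Nat.exists_strictMono_comp_eq {α : Type*} [Fintype α] (j : α → ℕ) :
    ∃ (j' : α → ℕ) (g : ℕ → ℕ), (∀ a, j' a < Fintype.card α) ∧ StrictMono g ∧
      ∀ a, g (j' a) = j a := by
  classical
  set s := Finset.univ.image j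
  have hjs (a : α) : j a ∈ s := Finset.mem_image_of_mem j (Finset.mem_univ a)
  -- `Nat.nth p` lists the values of `j` and then every number above their maximum;
  -- `Nat.count p (j a)` is the rank of `j a` in this list.
  let p : ℕ → Prop := fun n => n ∈ s ∨ s.sup id < n
  have hp : (Set.ofPred p).Infinite :=
    (Set.Ioi_infinite (s.sup id)).mono fun n hn => Or.inr hn
  have hcount (a : α) : Nat.count p (j a) < Fintype.card α := by
    have hsub : (Finset.range (j a)).filter p ⊂ s := by
      refine (Finset.ssubset_iff_of_subset fun n hn => ?_).2 ⟨j a, hjs a, by simp⟩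
      obtain ⟨hn, hpn⟩ := Finset.mem_filter.1 hn
      have hle : j a ≤ s.sup id := Finset.le_sup (f := id) (hjs a)
      exact hpn.resolve_right (by rw [Finset.mem_range] at hn; omega)
    rw [Nat.count_eq_card_filter_range]
    exact (Finset.card_lt_card hsub).trans_le (Finset.card_image_le.trans (by simp))
  exact ⟨fun a => Nat.count p (j a), Nat.nth p, hcount, Nat.nth_strictMono hp,
    fun a => Nat.nth_count (Or.inl (hjs a))⟩

theorem finite_range_of_strictMono_invariant {β γ : Type*} (F : List (ℕ × β) → γ)
    (hF : ∀ g : ℕ → ℕ, StrictMono g → ∀ L, F (L.map (Prod.map g id)) = F L)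
    {m : ℕ} (c : Fin m → β) :
    (Set.range fun j : Fin m → ℕ => F (List.ofFn fun u => (j u, c u))).Finite := by
  refine (Set.finite_range fun j' : Fin m → Fin m =>
    F (List.ofFn fun u => ((j' u : ℕ), c u))).subset ?_
  rintro _ ⟨j, rfl⟩
  obtain ⟨j', g, hj', hg, hgj⟩ := Nat.exists_strictMono_comp_eq j
  refine ⟨fun u => ⟨j' u, by simpa using hj' u⟩, ?_⟩
  dsimp only
  rw [← hF g hg, List.map_ofFn]
  simp [Function.comp_def, hgj]

open Finset in
theorem Finset.two_mul_card_image_le {α β : Type*} [Fintype α] [DecidableEq β] (f : α → β)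
    (hf : ∀ b, #{a | f a = b} ≠ 1) : 2 * #(univ.image f) ≤ Fintype.card α := by
  rw [← card_univ, card_eq_sum_card_image f univ, mul_comm, ← smul_eq_mul]
  refine card_nsmul_le_sum _ _ _ fun b hb => ?_
  obtain ⟨a, -, rfl⟩ := mem_image.1 hb
  have := hf (f a)
  have : 0 < #{x | f x = f a} := card_pos.2 ⟨a, by simp⟩
  omega

open Finset in
theorem Fintype.card_filter_card_image_le {α β : Type*} [Fintype α] [DecidableEq α]
    [Fintype β] [DecidableEq β] [Nonempty β] (h : ℕ) :
    #{f : α → β | #(univ.image f) ≤ h} ≤ h ^ Fintype.card α * Fintype.card β ^ h := by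
  classical
  calc #{f : α → β | #(univ.image f) ≤ h}
      ≤ #((univ : Finset ((α → Fin h) × (Fin h → β))).image fun p => p.2 ∘ p.1) := by
        refine card_le_card fun f hf => mem_image.2 ?_
        obtain ⟨emb⟩ : Nonempty ((univ.image f : Finset β) ↪ Fin h) :=
          Function.Embedding.nonempty_of_card_le <| by
            rw [Fintype.card_coe, Fintype.card_fin]; exact (mem_filter.1 hf).2
        refine ⟨(fun a => emb ⟨f a, mem_image_of_mem f (mem_univ a)⟩,
          Function.extend emb Subtype.val fun _ => Classical.arbitrary β), mem_univ _, ?_⟩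
        funext a
        simp [emb.injective.extend_apply]
    _ ≤ h ^ Fintype.card α * Fintype.card β ^ h := by
        refine card_image_le.trans ?_
        simp

open Finset in
theorem norm_sum_le_of_eq_zero_of_card_fiber_eq_one {E : Type*} [SeminormedAddCommGroup E]
    {h N : ℕ} [NeZero N] (f : (Fin (2 * h + 1) → Fin N) → E)
    (hf : ∀ j v, #{u | j u = v} = 1 → f j = 0) {C : ℝ} (hC : ∀ j, ‖f j‖ ≤ C) :
    ‖∑ j, f j‖ ≤ h ^ (2 * h + 1) * N ^ h * C := by
  classical
  have hC₀ : 0 ≤ C := (norm_nonneg _).trans (hC 0)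
  have hsupp (j : Fin (2 * h + 1) → Fin N) (hj : f j ≠ 0) : #(univ.image j) ≤ h := by
    have := Finset.two_mul_card_image_le j fun v hv => hj (hf j v hv)
    simp only [Fintype.card_fin] at this
    omega
  calc ‖∑ j, f j‖ = ‖∑ j with #(univ.image j) ≤ h, f j‖ := by
        rw [sum_filter_of_ne fun j _ => hsupp j]
    _ ≤ ∑ j with #(univ.image j) ≤ h, ‖f j‖ := norm_sum_le _ _
    _ ≤ #{j : Fin (2 * h + 1) → Fin N | #(univ.image j) ≤ h} • C :=
        sum_le_card_nsmul _ _ _ fun j _ => hC j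
    _ ≤ h ^ (2 * h + 1) * N ^ h * C := by
        rw [nsmul_eq_mul]
        gcongr
        exact_mod_cast (Fintype.card_filter_card_image_le h).trans_eq (by simp)

open Finset in
theorem tendsto_smul_sum_of_card_fiber_eq_one {E : Type*} [SeminormedAddCommGroup E]
    [NormedSpace ℂ E] {h : ℕ} (f : (Fin (2 * h + 1) → ℕ) → E)
    (hf : ∀ j v, #{u | j u = v} = 1 → f j = 0) (hfin : (Set.range f).Finite) :
    Filter.Tendsto (fun N : ℕ => ((Real.sqrt N : ℂ))⁻¹ ^ (2 * h + 1) •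
      ∑ j : Fin (2 * h + 1) → Fin N, f fun u => j u) Filter.atTop (nhds 0) := by
  obtain ⟨C, hC⟩ := (hfin.image (‖·‖)).bddAbove
  refine squeeze_zero_norm' ?_ (tendsto_const_nhds.div_atTop
    (Real.tendsto_sqrt_atTop.comp tendsto_natCast_atTop_atTop) (a := h ^ (2 * h + 1) * C))
  filter_upwards [Filter.eventually_gt_atTop 0] with N hN
  have : NeZero N := ⟨hN.ne'⟩
  have hsum := norm_sum_le_of_eq_zero_of_card_fiber_eq_one (fun j : Fin (2 * h + 1) → Fin N =>
    f fun u => j u) (fun j v hv => hf _ v (by simpa [Fin.val_inj] using hv))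
    fun j => hC ⟨_, ⟨_, rfl⟩, rfl⟩
  rw [norm_smul, norm_pow, norm_inv, Complex.norm_real, Real.norm_of_nonneg (by positivity)]
  calc _ ≤ (Real.sqrt N)⁻¹ ^ (2 * h + 1) * (h ^ (2 * h + 1) * N ^ h * C) := by gcongr
    _ = h ^ (2 * h + 1) * C / Real.sqrt N := by
      rw [inv_pow, pow_succ, pow_mul, Real.sq_sqrt (Nat.cast_nonneg N)]
      field_simp

theorem prod_ofFn_smul_sum_mul {R A : Type*} [CommSemiring R] [Semiring A] [Algebra R A]
    {n N : ℕ} (z : R) (x : Fin N → A) (b : Fin n → A) :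
    (List.ofFn fun u => (z • ∑ k, x k) * b u).prod =
      z ^ n • ∑ j : Fin n → Fin N, (List.ofFn fun u => x (j u) * b u).prod := by
  let W := (MultilinearMap.mkPiAlgebraFin R n A).compLinearMap fun u => LinearMap.mulRight R (b u)
  have hW (y : Fin n → A) : W y = (List.ofFn fun u => y u * b u).prod := by
    simp [W, MultilinearMap.mkPiAlgebraFin_apply]
  have := W.map_smul_univ (fun _ => z) fun _ => ∑ k, x k
  simp only [Finset.prod_const, Finset.card_univ, Fintype.card_fin, W.map_sum] at this
  simpa only [hW] using this

theorem momWord_succ_eq_prod_ofFn {A : Type*} [Ring A] (x : A) {b b' : ℕ → A} {s : ℕ}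
    (hb : ∀ t < s, b' t = b t) (hs : b' s = 1) :
    momWord x b (s + 1) = (List.ofFn fun u : Fin (s + 1) => x * b' u).prod := by
  rw [momWord, List.ofFn_succ', List.prod_concat, Nat.add_sub_cancel]
  simp [hs, hb]

theorem momWord_smul_sum_eq_sum_word {R A B : Type*} [CommSemiring R] [Ring A] [Algebra R A]
    [Ring B] (ι : B →+* A) (X : ℕ → A) (z : R) (c : ℕ → B) (s N : ℕ) :
    momWord (z • ∑ k ∈ Finset.range N, X k) (fun t => ι (c t)) (s + 1) =
      z ^ (s + 1) • ∑ j : Fin (s + 1) → Fin N,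
        word ι X (List.ofFn fun u => ((j u : ℕ), Function.update c s 1 u)) := by
  rw [momWord_succ_eq_prod_ofFn _ (b' := fun t => ι (Function.update c s 1 t))
    (fun t ht => by simp [Function.update_of_ne ht.ne]) (by simp),
    ← Fin.sum_univ_eq_sum_range, prod_ofFn_smul_sum_mul]
  simp [word, List.map_ofFn, Function.comp_def]

theorem monotone_clt_odd_moments_vanish_general {B A : Type*} [CStarAlgebra B]
    [Ring A] [Algebra ℂ A] [StarRing A] [StarModule ℂ A]
    (ι : B →⋆ₐ[ℂ] A) (hι : Function.Injective ι)
    (Φ : A →ₗ[ℂ] B)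
    (hbimod : ∀ (c₁ c₂ : B) (x : A), Φ (ι c₁ * x * ι c₂) = c₁ * Φ x * c₂)
    (X : ℕ → A)
    (hindep : MonoIndep (fun x => ι (Φ x))
      (fun n : ℕ => (Algebra.adjoin ℂ ({X n} ∪ Set.range ι) : Set A)))
    (hmom : ∀ (ii jj r : ℕ), 1 ≤ r → ∀ c : ℕ → B,
      Φ (momWord (X ii) (fun t => ι (c t)) r) = Φ (momWord (X jj) (fun t => ι (c t)) r))
    (hcent : ∀ n, Φ (X n) = 0)
    (m : ℕ) (hodd : Odd m) (c : ℕ → B) :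
    Filter.Tendsto
      (fun N : ℕ =>
        Φ (momWord (((Real.sqrt N : ℂ))⁻¹ • ∑ k ∈ Finset.range N, X k)
          (fun t => ι (c t)) m))
      Filter.atTop (nhds 0) := by
  obtain ⟨h, rfl⟩ := hodd
  let ι' : B →+* A := ι
  let S n := (Algebra.adjoin ℂ ({X n} ∪ Set.range ι)).toSubmonoid
  have hXS n : X n ∈ S n := Algebra.subset_adjoin (Or.inl rfl)
  have hιS n b : ι' b ∈ S n := Algebra.subset_adjoin (Or.inr ⟨b, rfl⟩)
  let f (j : Fin (2 * h + 1) → ℕ) : B :=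
    Φ (word ι' X (List.ofFn fun u => (j u, Function.update c (2 * h) 1 u)))
  have hf j v (hv : (Finset.univ.filter fun u => j u = v).card = 1) : f j = 0 := by
    simpa [f, ι'] using phi_word_ofFn_eq_zero_of_card_fiber_eq_one (ι := ι') hι hindep hXS hιS
      hbimod hcent j (fun u => Function.update c (2 * h) 1 u) hv 1
  have hfin : (Set.range f).Finite :=
    finite_range_of_strictMono_invariant (fun L => Φ (word ι' X L)) (fun g hg L => by
      simpa [ι'] using phi_word_map_strictMono (ι := ι') hι hindep hXS hιS hbimod hmom hg L 1) _
  refine (tendsto_smul_sum_of_card_fiber_eq_one f hf hfin).congr fun N => ?_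
  rw [show (fun t => ι (c t)) = fun t => ι' (c t) from rfl, momWord_smul_sum_eq_sum_word,
    map_smul, map_sum]

/-- Theorem 5.3, vanishing of odd limit moments: for a monotonically
independent, identically distributed, centered selfadjoint family `(X_n)` over the
C*-algebra `𝔅`, the odd moments of `S_N = (X₁ + ⋯ + X_N)/√N` tend to `0` in norm. -/
theorem monotone_clt_odd_moments_vanish {B A : Type*} [CStarAlgebra B]
    [Ring A] [Algebra ℂ A] [StarRing A] [StarModule ℂ A]
    (ι : B →⋆ₐ[ℂ] A) (hι : Function.Injective ι)
    (Φ : A →ₗ[ℂ] B)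
    (hfix : ∀ c : B, Φ (ι c) = c)
    (hbimod : ∀ (c₁ c₂ : B) (x : A), Φ (ι c₁ * x * ι c₂) = c₁ * Φ x * c₂)
    (X : ℕ → A)
    (hsa : ∀ n, star (X n) = X n)
    (hindep : MonoIndep (fun x => ι (Φ x))
      (fun n : ℕ => (Algebra.adjoin ℂ ({X n} ∪ Set.range ι) : Set A)))
    (hmom : ∀ (ii jj r : ℕ), 1 ≤ r → ∀ c : ℕ → B,
      Φ (momWord (X ii) (fun t => ι (c t)) r) = Φ (momWord (X jj) (fun t => ι (c t)) r))
    (hcent : ∀ n, Φ (X n) = 0)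
    (m : ℕ) (hm : 1 ≤ m) (hodd : Odd m) (c : ℕ → B) :
    Filter.Tendsto
      (fun N : ℕ =>
        Φ (momWord (((Real.sqrt N : ℂ))⁻¹ • ∑ k ∈ Finset.range N, X k)
          (fun t => ι (c t)) m))
      Filter.atTop (nhds 0) :=
  monotone_clt_odd_moments_vanish_general ι hι Φ hbimod X hindep hmom hcent m hodd c
end

section
/- Let 𝔅 be a unital C*-algebra and 𝔄 a *-algebra containing 𝔅 as a *-subalgebra. Let 𝔄₂ ⊆ 𝔄 be a *-subalgebra containing 𝔅, and let 𝔄₁ = 𝔅 ⊕ 𝔄₁⁰ be a *-subalgebra of 𝔄, where 𝔄₁⁰ is a *-subalgebra with 𝔅·𝔄₁⁰ ⊆ 𝔄₁⁰ and 𝔄₁⁰·𝔅 ⊆ 𝔄₁⁰. Suppose every element of 𝔄 is a finite sum of products b₀a₁b₁a₂⋯aₙbₙ with n ≥ 0, b_j ∈ 𝔄₂ and a_j ∈ 𝔄₁⁰. Let Φ : 𝔄 → 𝔅 be a conditional expectation such that Φ₁ = Φ|_{𝔄₁} and Φ₂ = Φ|_{𝔄₂} are positive, and such that for all a, a' ∈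 𝔄₁⁰, b ∈ 𝔄₂ and α, β ∈ 𝔄: Φ(α a b a' β) = Φ(α a Φ₂(b) a' β), Φ(b a β) = Φ₂(b) Φ(a β), Φ(α a b) = Φ(α a) Φ₂(b) (and the corresponding relations with α and/or β omitted). Then Φ is positive: Φ(x*x) ≥ 0 in 𝔅 for every x ∈ 𝔄. -/
/-!
Write `x = ∑ᵢ bᵢ wᵢ` with `bᵢ ∈ 𝔄₂` and `wᵢ = a₁ b₁ ⋯ aₙ bₙ` an alternating word. In
`(bᵢ wᵢ)* (bⱼ wⱼ)` every letter from `𝔄₂` is flanked by letters from `𝔄₁⁰` or by an end of the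
word, and the relations of the monotonic product let `Φ` replace each such letter `w` by `Φ₂ w`.
Hence `Φ (x* x) = ∑ᵢⱼ Φ (hᵢ* Mᵢⱼ hⱼ)`, where `hᵢ ∈ 𝔅 + 𝔄₁⁰` are the collapsed words and
`M = [Φ₂ (bᵢ* bⱼ)]` is a positive semidefinite matrix over `𝔅`, by positivity of `Φ₂`.
For `ε > 0` the matrix `M + ε` has a pivot bounded below by `ε`, so Schur complements give an
LDL* factorisation `M + ε = ∑ᵣ tᵣ* dᵣ tᵣ` with `dᵣ ≥ 0`. Each `r` contributes
`Φ₁ (y* y) ≥ 0` with `y = √dᵣ ∑ⱼ tᵣⱼ hⱼ ∈ 𝔅 + 𝔄₁⁰`, and letting `ε → 0` concludes.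
-/

section Polarization

variable {A B : Type*} [Ring A] [Algebra ℂ A] [StarRing A] [StarModule ℂ A]
  [AddCommGroup B] [Module ℂ B] [StarAddMonoid B] [StarModule ℂ B]

theorem LinearMap.map_star_of_isSelfAdjoint_map_star_mul_self (Φ : A →ₗ[ℂ] B)
    (S : Subalgebra ℂ A) (hS : ∀ w ∈ S, IsSelfAdjoint (Φ (star w * w))) {w : A} (hw : w ∈ S) :
    Φ (star w) = star (Φ w) := by
  have hpolar : ∀ z : ℂ, IsSelfAdjoint (z • Φ (star w) + star z • Φ w) := by
    intro z
    have hz : z • (1 : A) ∈ S := S.smul_mem (one_mem S) z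
    have := ((hS _ (add_mem hw hz)).sub (hS w hw)).sub (hS _ hz)
    convert this using 1
    simp only [star_add, star_smul, star_one, add_mul, mul_add, smul_mul_assoc, mul_smul_comm,
      one_mul, mul_one, map_add, map_smul]
    module
  have h₁ := (hpolar 1).star_eq
  have h₂ := (hpolar Complex.I).star_eq
  simp only [star_add, star_smul, star_one, one_smul, Complex.star_def, Complex.conj_I, map_neg,
    neg_neg] at h₁ h₂
  linear_combination (norm := match_scalars <;> ring_nf <;> rw [Complex.I_sq] <;> ring)
    -(1 / 2 : ℂ) • h₁ + (Complex.I / 2) • h₂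

end Polarization

theorem IsSelfAdjoint.coe_units_inv {R : Type*} [Monoid R] [StarMul R] {u : Rˣ}
    (hu : IsSelfAdjoint (u : R)) : IsSelfAdjoint (↑u⁻¹ : R) := by
  have hu' : star u = u := Units.ext (by rw [Units.coe_star, hu.star_eq])
  rw [IsSelfAdjoint, ← Units.coe_star_inv, hu']

namespace Matrix

section Ring

variable {R : Type*} [Ring R] [StarRing R]

theorem conjTranspose_mul_diagonal_mul_apply {n : Type*} [Fintype n] [DecidableEq n]
    (T : Matrix n n R) (D : n → R) (i j : n) :
    (Tᴴ * diagonal D * T) i j = ∑ r, star (T r i) * D r * T r j := by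
  rw [mul_apply]
  simp only [mul_diagonal, conjTranspose_apply]

theorem IsHermitian.star_cons_dotProduct_mulVec_cons {m : ℕ}
    {M : Matrix (Fin (m + 1)) (Fin (m + 1)) R} (hM : M.IsHermitian) (x : R) (c : Fin m → R) :
    star (Fin.cons x c : Fin (m + 1) → R) ⬝ᵥ (M *ᵥ Fin.cons x c) =
      star x * M 0 0 * x + star x * (fun j => M 0 j.succ) ⬝ᵥ c
        + star ((fun j => M 0 j.succ) ⬝ᵥ c) * x
        + star c ⬝ᵥ (M.submatrix Fin.succ Fin.succ *ᵥ c) := by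
  have hcol : ∀ i : Fin m, M i.succ 0 = star (M 0 i.succ) := fun i => (hM.apply i.succ 0).symm
  simp only [dotProduct, mulVec, Fin.sum_univ_succ, Pi.star_apply, Fin.cons_zero, Fin.cons_succ,
    submatrix_apply, star_sum, star_mul, mul_add, Finset.mul_sum, Finset.sum_mul,
    Finset.sum_add_distrib, hcol, mul_assoc]
  abel

/-- The Schur complement of the entry `M 0 0`, with `t` standing for its inverse. -/
def schurCompl₀ {m : ℕ} (M : Matrix (Fin (m + 1)) (Fin (m + 1)) R) (t : R) :
    Matrix (Fin m) (Fin m) R :=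
  of fun i j => M i.succ j.succ - M i.succ 0 * t * M 0 j.succ

theorem IsHermitian.star_dotProduct_schurCompl₀_mulVec {m : ℕ}
    {M : Matrix (Fin (m + 1)) (Fin (m + 1)) R} (hM : M.IsHermitian) (t : R) (c : Fin m → R) :
    star c ⬝ᵥ (M.schurCompl₀ t *ᵥ c) = star c ⬝ᵥ (M.submatrix Fin.succ Fin.succ *ᵥ c)
      - star ((fun j => M 0 j.succ) ⬝ᵥ c) * t * ((fun j => M 0 j.succ) ⬝ᵥ c) := by
  have hcol : ∀ i : Fin m, M i.succ 0 = star (M 0 i.succ) := fun i => (hM.apply i.succ 0).symm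
  simp only [schurCompl₀, dotProduct, mulVec, of_apply, submatrix_apply, Pi.star_apply, star_sum,
    star_mul, hcol, sub_mul, mul_sub, Finset.sum_sub_distrib, Finset.mul_sum, Finset.sum_mul,
    mul_assoc]
  rw [Finset.sum_comm (f := fun i j => star (c j) * _)]

theorem IsHermitian.of_sub_smul_one [Module ℝ R] [StarModule ℝ R] {n : Type*} [DecidableEq n]
    {M : Matrix n n R} {δ : ℝ} (hM : (M - δ • 1).IsHermitian) : M.IsHermitian := by
  simpa using hM.add ((isHermitian_one (α := R)).smul (IsSelfAdjoint.all δ))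

end Ring

section OrderedRing

variable {R : Type*} [Ring R] [PartialOrder R] [StarRing R] [StarOrderedRing R] [Algebra ℝ R]
  [StarModule ℝ R] [PosSMulMono ℝ R]

theorem PosSemidef.schurCompl₀_sub_smul_one {m : ℕ} {M : Matrix (Fin (m + 1)) (Fin (m + 1)) R}
    {δ : ℝ} (hδ : 0 ≤ δ) (hM : (M - δ • 1).PosSemidef) (u : Rˣ) (hu : (u : R) = M 0 0) :
    (M.schurCompl₀ ↑u⁻¹ - δ • 1).PosSemidef := by
  have hMh : M.IsHermitian := .of_sub_smul_one hM.isHermitian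
  have hinv : star (↑u⁻¹ : R) = ↑u⁻¹ :=
    IsSelfAdjoint.coe_units_inv (by rw [IsSelfAdjoint, hu]; exact hMh.apply 0 0)
  refine .of_dotProduct_mulVec_nonneg (.sub (.ext fun i j => ?_)
    ((isHermitian_one (α := R)).smul (IsSelfAdjoint.all δ))) fun c => ?_
  · simp only [schurCompl₀, of_apply, star_sub, star_mul, hinv, hMh.apply, mul_assoc]
  rw [sub_mulVec, dotProduct_sub, hMh.star_dotProduct_schurCompl₀_mulVec]
  set w := (fun j => M 0 j.succ) ⬝ᵥ c
  -- completing the square: the form of `M - δ • 1` at `(x, c)` with this `x`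
  set x := -(↑u⁻¹ * w)
  have hx : star x = -(star w * ↑u⁻¹) := by simp [x, hinv]
  have key := hM.dotProduct_mulVec_nonneg (Fin.cons x c)
  have h00 : (M - δ • 1) 0 0 = ↑u - δ • 1 := by simp [hu]
  have hrow : (fun j : Fin m => (M - δ • 1) 0 j.succ) = fun j => M 0 j.succ := by
    ext j
    simp [one_apply_ne (Fin.succ_ne_zero j).symm]
  have hsub : (M - δ • 1).submatrix Fin.succ Fin.succ = M.submatrix Fin.succ Fin.succ - δ • 1 := by
    ext i j
    simp [one_apply]
  have hpivot : star x * ↑u * x + star x * w + star w * x = -(star w * ↑u⁻¹ * w) := by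
    simp only [hx, x, neg_mul, mul_neg, neg_neg, mul_assoc, Units.inv_mul_cancel_left]
    abel
  rw [IsHermitian.star_cons_dotProduct_mulVec_cons hM.isHermitian, h00, hrow, hsub, mul_sub,
    sub_mul, mul_smul_comm, mul_one, smul_mul_assoc] at key
  convert add_nonneg key (smul_nonneg hδ (star_mul_self_nonneg x)) using 1
  rw [show ∀ a b c d e : R, a - b + c + d + e + b = (a + c + d) + e by intros; abel, hpivot]
  simp only [sub_mulVec, smul_mulVec, one_mulVec, dotProduct_sub, dotProduct_smul]
  abel

end OrderedRing

variable {B : Type*} [CStarAlgebra B] [PartialOrder B] [StarOrderedRing B]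

theorem exists_eq_conjTranspose_mul_diagonal_mul {δ : ℝ} (hδ : 0 < δ) :
    ∀ {m : ℕ} (M : Matrix (Fin m) (Fin m) B), (M - δ • 1).PosSemidef →
      ∃ (T : Matrix (Fin m) (Fin m) B) (D : Fin m → B), 0 ≤ D ∧ M = Tᴴ * diagonal D * T := by
  intro m
  induction m with
  | zero => exact fun M _ => ⟨0, 0, le_rfl, Subsingleton.elim _ _⟩
  | succ m ih =>
    intro M hM
    have hMh : M.IsHermitian := .of_sub_smul_one hM.isHermitian
    have hpivot : δ • 1 ≤ M 0 0 := by simpa [sub_nonneg] using hM.diag_nonneg (i := 0)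
    obtain ⟨u, hu⟩ : IsUnit (M 0 0) :=
      CStarAlgebra.isUnit_of_le _ hpivot (.smul hδ isStrictlyPositive_one)
    have hinv : star (↑u⁻¹ : B) = ↑u⁻¹ :=
      IsSelfAdjoint.coe_units_inv (by rw [IsSelfAdjoint, hu]; exact hMh.apply 0 0)
    obtain ⟨T, D, hD, hMT⟩ := ih _ (hM.schurCompl₀_sub_smul_one hδ.le u hu)
    refine ⟨of (Fin.cons (Fin.cons 1 fun j => ↑u⁻¹ * M 0 j.succ) fun r => Fin.cons 0 (T r)),
      Fin.cons (M 0 0) D,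
      fun r => Fin.cases ((smul_nonneg hδ.le zero_le_one).trans hpivot) (fun r => hD r) r, ?_⟩
    ext i j
    rw [conjTranspose_mul_diagonal_mul_apply, Fin.sum_univ_succ]
    cases i using Fin.cases <;> cases j using Fin.cases <;> simp [hinv, hMh.apply, ← hu, mul_assoc]
    rename_i i j
    have hSchur := congr_fun₂ hMT i j
    simp only [schurCompl₀, of_apply, conjTranspose_mul_diagonal_mul_apply, mul_assoc] at hSchur
    rw [← hSchur, add_sub_cancel]

end Matrix

theorem nonneg_of_forall_pos_nonneg_add_smul {E : Type*} [AddCommGroup E] [Module ℝ E]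
    [TopologicalSpace E] [ContinuousAdd E] [ContinuousSMul ℝ E] [Preorder E] [ClosedIciTopology E]
    {x y : E} (h : ∀ ε : ℝ, 0 < ε → 0 ≤ x + ε • y) : 0 ≤ x := by
  have hlim : Filter.Tendsto (fun ε : ℝ => x + ε • y) (nhdsWithin 0 (Set.Ioi 0)) (nhds x) := by
    have : Continuous fun ε : ℝ => x + ε • y := by fun_prop
    simpa using (this.tendsto 0).mono_left nhdsWithin_le_nhds
  exact ge_of_tendsto hlim (eventually_mem_nhdsWithin.mono h)

open Matrix in
theorem sum_map_star_mul_mul_nonneg {A B : Type*} [CStarAlgebra B] [PartialOrder B]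
    [StarOrderedRing B] [Ring A] [Algebra ℂ A] [StarRing A] (ι : B →⋆ₐ[ℂ] A) (Φ : A →ₗ[ℂ] B)
    {m : ℕ} (h : Fin m → A) {M : Matrix (Fin m) (Fin m) B} (hM : M.PosSemidef)
    (hrow : ∀ t : Fin m → B, 0 ≤ Φ (star (∑ j, ι (t j) * h j) * ∑ j, ι (t j) * h j)) :
    0 ≤ ∑ i, ∑ j, Φ (star (h i) * ι (M i j) * h j) := by
  refine nonneg_of_forall_pos_nonneg_add_smul (y := ∑ i, Φ (star (h i) * h i)) fun ε hε => ?_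
  obtain ⟨T, D, hD, hMT⟩ :=
    exists_eq_conjTranspose_mul_diagonal_mul hε (M + ε • 1) (by simpa using hM)
  calc (0 : B) ≤ ∑ r, Φ (star (∑ j, ι (T r j) * h j) * ι (D r) * ∑ j, ι (T r j) * h j) := by
        refine Finset.sum_nonneg fun r _ => ?_
        obtain ⟨s, hs⟩ : ∃ s, D r = star s * s :=
          ⟨CFC.sqrt (D r), by rw [(CFC.sqrt_nonneg _).star_eq, CFC.sqrt_mul_sqrt_self _ (hD r)]⟩
        have hy : ι s * ∑ j, ι (T r j) * h j = ∑ j, ι (s * T r j) * h j := by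
          simp only [Finset.mul_sum, map_mul, mul_assoc]
        rw [hs, map_mul ι, map_star ι]
        simpa only [← hy, star_mul, mul_assoc] using hrow (fun j => s * T r j)
    _ = ∑ r, ∑ i, ∑ j, Φ (star (h i) * ι (star (T r i) * D r * T r j) * h j) := by
        simp only [star_sum, Finset.sum_mul, Finset.mul_sum, map_sum, star_mul, map_mul, map_star,
          mul_assoc]
        exact Finset.sum_congr rfl fun r _ => Finset.sum_comm
    _ = ∑ i, ∑ j, Φ (star (h i) * ι ((Tᴴ * diagonal D * T) i j) * h j) := by
        simp only [conjTranspose_mul_diagonal_mul_apply, map_sum, Finset.sum_mul, Finset.mul_sum]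
        rw [Finset.sum_comm]
        exact Finset.sum_congr rfl fun i _ => Finset.sum_comm
    _ = _ := by
        have hι : ι (ε • 1) = ε • 1 := by
          rw [← Complex.coe_smul, map_smul, map_one, Complex.coe_smul]
        simp [hι, ← hMT, add_mul, mul_add, Finset.sum_add_distrib, one_apply, Finset.smul_sum,
          apply_ite ι, apply_ite Φ, Φ.map_smul_of_tower]

section Words

variable {A : Type*} [Monoid A]

def alternatingProd (f : A → A) (l : List (A × A)) : A :=
  (l.map fun p => p.1 * f p.2).prod

@[simp] theorem alternatingProd_nil (f : A → A) : alternatingProd f [] = 1 := rfl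

@[simp] theorem alternatingProd_cons (f : A → A) (p : A × A) (l : List (A × A)) :
    alternatingProd f (p :: l) = p.1 * f p.2 * alternatingProd f l := by
  simp [alternatingProd]

def StartsIn (S : Set A) (x : A) : Prop := x = 1 ∨ ∃ a ∈ S, ∃ y, x = a * y

def EndsIn (S : Set A) (x : A) : Prop := x = 1 ∨ ∃ y, ∃ a ∈ S, x = y * a

theorem startsIn_alternatingProd {S : Set A} (f : A → A) {l : List (A × A)}
    (hl : ∀ p ∈ l, p.1 ∈ S) : StartsIn S (alternatingProd f l) := by
  cases l with
  | nil => exact .inl rfl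
  | cons p l =>
    exact .inr ⟨p.1, hl p List.mem_cons_self, f p.2 * alternatingProd f l, by simp [mul_assoc]⟩

theorem StartsIn.star_endsIn [StarMul A] {S : Set A} (hS : ∀ a ∈ S, star a ∈ S) {x : A}
    (hx : StartsIn S x) : EndsIn S (star x) := by
  rcases hx with rfl | ⟨a, ha, y, rfl⟩
  · exact .inl (star_one A)
  · exact .inr ⟨star y, star a, hS a ha, star_mul a y⟩

end Words

theorem AddSubmonoid.exists_fin_sum_of_mem_closure {M : Type*} [AddCommMonoid M] {s : Set M}
    {x : M} (hx : x ∈ closure s) : ∃ (m : ℕ) (y : Fin m → M), (∀ i, y i ∈ s) ∧ x = ∑ i, y i := by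
  obtain ⟨L, hL, rfl⟩ := exists_list_of_mem_closure hx
  exact ⟨L.length, L.get, fun i => hL _ (List.get_mem L i), by rw [← List.sum_ofFn, List.ofFn_get]⟩

theorem exists_fin_sum_mul_alternatingProd {A : Type*} [Ring A] {S₁ S₂ : Set A} {x : A}
    (hx : x ∈ AddSubmonoid.closure
      {y : A | ∃ (n : ℕ) (bs as : ℕ → A),
        (∀ j, j ≤ n → bs j ∈ S₂) ∧ (∀ j, 1 ≤ j → j ≤ n → as j ∈ S₁) ∧
        y = bs 0 * (List.ofFn fun t : Fin n => as (t.1 + 1) * bs (t.1 + 1)).prod}) :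
    ∃ (m : ℕ) (b : Fin m → A) (l : Fin m → List (A × A)), (∀ i, b i ∈ S₂) ∧
      (∀ i, ∀ p ∈ l i, p.1 ∈ S₁ ∧ p.2 ∈ S₂) ∧ x = ∑ i, b i * alternatingProd id (l i) := by
  obtain ⟨m, y, hy, rfl⟩ := AddSubmonoid.exists_fin_sum_of_mem_closure hx
  choose n bs as hbs has hy using hy
  refine ⟨m, fun i => bs i 0, fun i => List.ofFn fun t : Fin (n i) => (as i (t + 1), bs i (t + 1)),
    fun i => hbs i 0 (Nat.zero_le _), fun i p hp => ?_, Finset.sum_congr rfl fun i _ => ?_⟩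
  · obtain ⟨t, rfl⟩ := List.mem_ofFn.mp hp
    exact ⟨has i _ (Nat.le_add_left 1 t) t.isLt, hbs i _ t.isLt⟩
  · rw [hy i, alternatingProd, List.map_ofFn]
    rfl

section Collapse

variable {A B : Type*} [Ring A] [Algebra ℂ A] [StarRing A] [Ring B] [Algebra ℂ B] [StarRing B]

theorem exists_alternatingProd_eq_add {ι : B →⋆ₐ[ℂ] A} {A₁₀ : NonUnitalStarSubalgebra ℂ A}
    (hA₁₀B : ∀ (c : B), ∀ a ∈ A₁₀, a * ι c ∈ A₁₀) (g : A → B)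
    {l : List (A × A)} (hl : ∀ p ∈ l, p.1 ∈ A₁₀) :
    ∃ c, ∃ a ∈ A₁₀, alternatingProd (fun w => ι (g w)) l = ι c + a := by
  induction l with
  | nil => exact ⟨1, 0, zero_mem _, by simp⟩
  | cons p l ih =>
    obtain ⟨c, a, ha, h⟩ := ih fun q hq => hl q (List.mem_cons_of_mem p hq)
    have hp := hA₁₀B (g p.2) p.1 (hl p List.mem_cons_self)
    refine ⟨0, p.1 * ι (g p.2) * ι c + p.1 * ι (g p.2) * a,
      add_mem (hA₁₀B c _ hp) (mul_mem hp ha), ?_⟩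
    rw [alternatingProd_cons, h, mul_add, map_zero, zero_add]

variable [StarModule ℂ A] (ι : B →⋆ₐ[ℂ] A) (Φ : A →ₗ[ℂ] B) (A₂ : StarSubalgebra ℂ A)
  (A₁₀ : NonUnitalStarSubalgebra ℂ A)

/-- `Φ` may replace a letter `w ∈ A₂` by `ι (Φ w)` wherever `w` is flanked on each side either by
a letter of `A₁₀` or by an end of the word. -/
def CollapsesFlanked : Prop :=
  ∀ α β : A, EndsIn A₁₀ α → StartsIn A₁₀ β → ∀ w ∈ A₂, Φ (α * w * β) = Φ (α * ι (Φ w) * β)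

variable {ι Φ A₂ A₁₀}

theorem collapsesFlanked_of_relations
    (hfix : ∀ c : B, Φ (ι c) = c)
    (hbimod : ∀ (c₁ c₂ : B) (x : A), Φ (ι c₁ * x * ι c₂) = c₁ * Φ x * c₂)
    (hrel₁ : ∀ a ∈ A₁₀, ∀ a' ∈ A₁₀, ∀ w ∈ A₂, ∀ α β : A,
      Φ (α * a * w * a' * β) = Φ (α * a * ι (Φ w) * a' * β))
    (hrel₅ : ∀ w ∈ A₂, ∀ a ∈ A₁₀, ∀ β : A, Φ (w * a * β) = Φ w * Φ (a * β))
    (hrel₇ : ∀ a ∈ A₁₀, ∀ w ∈ A₂, ∀ α : A, Φ (α * a * w) = Φ (α * a) * Φ w) :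
    CollapsesFlanked ι Φ A₂ A₁₀ := by
  have hleft (c : B) (x : A) : Φ (ι c * x) = c * Φ x := by simpa using hbimod c 1 x
  have hright (x : A) (c : B) : Φ (x * ι c) = Φ x * c := by simpa using hbimod 1 c x
  rintro α β (rfl | ⟨γ, a, ha, rfl⟩) (rfl | ⟨a', ha', δ, rfl⟩) w hw
  · simp [hfix]
  · simp only [one_mul, ← mul_assoc, hrel₅ w hw a' ha']
    rw [mul_assoc, hleft]
  · simp only [mul_one, hrel₇ a ha w hw, hright]
  · simp only [← mul_assoc, hrel₁ a ha a' ha' w hw]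

theorem CollapsesFlanked.map_mul_alternatingProd (hΦ : CollapsesFlanked ι Φ A₂ A₁₀)
    {l : List (A × A)} (hl : ∀ p ∈ l, p.1 ∈ A₁₀ ∧ p.2 ∈ A₂) (α : A) :
    Φ (α * alternatingProd id l) = Φ (α * alternatingProd (fun w => ι (Φ w)) l) := by
  induction l generalizing α with
  | nil => rfl
  | cons p l ih =>
    obtain ⟨ha, hb⟩ := hl p List.mem_cons_self
    have hl' := fun q hq => hl q (List.mem_cons_of_mem p hq)
    calc Φ (α * alternatingProd id (p :: l)) = Φ (α * p.1 * p.2 * alternatingProd id l) := by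
          simp [mul_assoc]
      _ = Φ (α * p.1 * ι (Φ p.2) * alternatingProd id l) :=
          hΦ _ _ (.inr ⟨α, p.1, ha, rfl⟩) (startsIn_alternatingProd _ fun q hq => (hl' q hq).1) _ hb
      _ = Φ (α * alternatingProd (fun w => ι (Φ w)) (p :: l)) := by
          rw [ih hl']
          simp [mul_assoc]

theorem CollapsesFlanked.map_star_alternatingProd_mul (hΦ : CollapsesFlanked ι Φ A₂ A₁₀)
    (hstar : ∀ w ∈ A₂, Φ (star w) = star (Φ w)) {l : List (A × A)}
    (hl : ∀ p ∈ l, p.1 ∈ A₁₀ ∧ p.2 ∈ A₂) (β : A) :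
    Φ (star (alternatingProd id l) * β) =
      Φ (star (alternatingProd (fun w => ι (Φ w)) l) * β) := by
  induction l generalizing β with
  | nil => rfl
  | cons p l ih =>
    obtain ⟨ha, hb⟩ := hl p List.mem_cons_self
    have hl' := fun q hq => hl q (List.mem_cons_of_mem p hq)
    calc Φ (star (alternatingProd id (p :: l)) * β)
        = Φ (star (alternatingProd id l) * star p.2 * (star p.1 * β)) := by
          simp [mul_assoc]
      _ = Φ (star (alternatingProd id l) * ι (Φ (star p.2)) * (star p.1 * β)) :=
          hΦ _ _ ((startsIn_alternatingProd _ fun q hq => (hl' q hq).1).star_endsIn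
            fun a ha => star_mem ha) (.inr ⟨star p.1, star_mem ha, β, rfl⟩) _ (star_mem hb)
      _ = Φ (star (alternatingProd (fun w => ι (Φ w)) (p :: l)) * β) := by
          rw [mul_assoc, ih hl', hstar _ hb]
          simp [mul_assoc, map_star]

theorem CollapsesFlanked.map_star_mul (hΦ : CollapsesFlanked ι Φ A₂ A₁₀)
    (hstar : ∀ w ∈ A₂, Φ (star w) = star (Φ w)) {b b' : A} (hb : b ∈ A₂) (hb' : b' ∈ A₂)
    {l l' : List (A × A)} (hl : ∀ p ∈ l, p.1 ∈ A₁₀ ∧ p.2 ∈ A₂)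
    (hl' : ∀ p ∈ l', p.1 ∈ A₁₀ ∧ p.2 ∈ A₂) :
    Φ (star (b * alternatingProd id l) * (b' * alternatingProd id l')) =
      Φ (star (alternatingProd (fun w => ι (Φ w)) l) * ι (Φ (star b * b')) *
        alternatingProd (fun w => ι (Φ w)) l') := by
  set C := alternatingProd (fun w => ι (Φ w))
  calc Φ (star (b * alternatingProd id l) * (b' * alternatingProd id l'))
      = Φ (star (alternatingProd id l) * (star b * b') * alternatingProd id l') := by
        simp [mul_assoc]
    _ = Φ (star (alternatingProd id l) * (star b * b' * C l')) := by
        rw [hΦ.map_mul_alternatingProd hl', mul_assoc]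
    _ = Φ (star (C l) * (star b * b') * C l') := by
        rw [hΦ.map_star_alternatingProd_mul hstar hl, ← mul_assoc]
    _ = Φ (star (C l) * ι (Φ (star b * b')) * C l') :=
        hΦ _ _ ((startsIn_alternatingProd _ fun q hq => (hl q hq).1).star_endsIn
          fun a ha => star_mem ha) (startsIn_alternatingProd _ fun q hq => (hl' q hq).1) _
          (mul_mem (star_mem hb) hb')

end Collapse

open Matrix in
theorem posSemidef_map_star_mul {A B : Type*} [Ring A] [Algebra ℂ A] [StarRing A] [StarModule ℂ A]
    [Ring B] [Algebra ℂ B] [StarRing B] [StarModule ℂ B] [PartialOrder B] [StarOrderedRing B]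
    {ι : B →⋆ₐ[ℂ] A} {Φ : A →ₗ[ℂ] B}
    (hbimod : ∀ (c₁ c₂ : B) (x : A), Φ (ι c₁ * x * ι c₂) = c₁ * Φ x * c₂)
    {S : StarSubalgebra ℂ A} (hιS : ∀ c, ι c ∈ S) (hpos : ∀ w ∈ S, 0 ≤ Φ (star w * w))
    {m : ℕ} {b : Fin m → A} (hb : ∀ i, b i ∈ S) :
    (Matrix.of fun i j => Φ (star (b i) * b j)).PosSemidef := by
  refine .of_dotProduct_mulVec_nonneg (.ext fun i j => ?_) fun c => ?_
  · rw [of_apply, of_apply, ← Φ.map_star_of_isSelfAdjoint_map_star_mul_self S.toSubalgebra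
      (fun w hw => (hpos w hw).isSelfAdjoint)
      (show star (b j) * b i ∈ S from mul_mem (star_mem (hb j)) (hb i)), star_mul, star_star]
  · convert hpos (∑ j, b j * ι (c j)) (sum_mem fun j _ => mul_mem (hb j) (hιS (c j))) using 1
    simp only [dotProduct, mulVec, of_apply, Pi.star_apply, star_sum, star_mul, Finset.sum_mul,
      Finset.mul_sum, map_sum, ← map_star ι]
    rw [Finset.sum_comm]
    refine Finset.sum_congr rfl fun i _ => Finset.sum_congr rfl fun j _ => ?_
    rw [← mul_assoc, ← hbimod]
    simp only [mul_assoc]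

theorem monotonicProduct_positive_general {B A : Type*}
    [CStarAlgebra B] [PartialOrder B] [StarOrderedRing B]
    [Ring A] [Algebra ℂ A] [StarRing A] [StarModule ℂ A]
    (ι : B →⋆ₐ[ℂ] A)
    (A₂ : StarSubalgebra ℂ A) (hA₂B : ∀ c : B, ι c ∈ A₂)
    (A₁₀ : NonUnitalStarSubalgebra ℂ A)
    (hBA₁₀ : ∀ (c : B), ∀ a ∈ A₁₀, ι c * a ∈ A₁₀)
    (hA₁₀B : ∀ (c : B), ∀ a ∈ A₁₀, a * ι c ∈ A₁₀)
    (hgen : ∀ x : A, x ∈ AddSubmonoid.closure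
      {y : A | ∃ (n : ℕ) (bs as : ℕ → A),
        (∀ j, j ≤ n → bs j ∈ A₂) ∧ (∀ j, 1 ≤ j → j ≤ n → as j ∈ A₁₀) ∧
        y = bs 0 * (List.ofFn fun t : Fin n => as (t.1 + 1) * bs (t.1 + 1)).prod})
    (Φ : A →ₗ[ℂ] B)
    (hfix : ∀ c : B, Φ (ι c) = c)
    (hbimod : ∀ (c₁ c₂ : B) (x : A), Φ (ι c₁ * x * ι c₂) = c₁ * Φ x * c₂)
    -- positivity of `Φ₁ = Φ|_{𝔄₁}` (with `𝔄₁ = 𝔅 ⊕ 𝔄₁⁰`) and of `Φ₂ = Φ|_{𝔄₂}`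
    (hpos₁ : ∀ (c : B), ∀ a ∈ A₁₀, 0 ≤ Φ (star (ι c + a) * (ι c + a)))
    (hpos₂ : ∀ w ∈ A₂, 0 ≤ Φ (star w * w))
    -- the defining relations of the monotonic product `Φ₁ ▷ Φ₂`
    (hrel₁ : ∀ a ∈ A₁₀, ∀ a' ∈ A₁₀, ∀ w ∈ A₂, ∀ α β : A,
      Φ (α * a * w * a' * β) = Φ (α * a * ι (Φ w) * a' * β))
    (hrel₅ : ∀ w ∈ A₂, ∀ a ∈ A₁₀, ∀ β : A, Φ (w * a * β) = Φ w * Φ (a * β))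
    (hrel₇ : ∀ a ∈ A₁₀, ∀ w ∈ A₂, ∀ α : A, Φ (α * a * w) = Φ (α * a) * Φ w) :
    ∀ x : A, 0 ≤ Φ (star x * x) := by
  intro x
  obtain ⟨m, b, l, hb, hl, rfl⟩ := exists_fin_sum_mul_alternatingProd (hgen x)
  have hΦ := collapsesFlanked_of_relations hfix hbimod hrel₁ hrel₅ hrel₇
  have hstar (w : A) (hw : w ∈ A₂) : Φ (star w) = star (Φ w) :=
    Φ.map_star_of_isSelfAdjoint_map_star_mul_self A₂.toSubalgebra
      (fun v hv => (hpos₂ v hv).isSelfAdjoint) hw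
  set h := fun i => alternatingProd (fun w => ι (Φ w)) (l i)
  choose c a ha hca using fun i => exists_alternatingProd_eq_add hA₁₀B Φ fun p hp => (hl i p hp).1
  have hrow (t : Fin m → B) : 0 ≤ Φ (star (∑ j, ι (t j) * h j) * ∑ j, ι (t j) * h j) := by
    have hsplit : ∑ j, ι (t j) * h j = ι (∑ j, t j * c j) + ∑ j, ι (t j) * a j := by
      simp only [h, hca, mul_add, Finset.sum_add_distrib, map_sum, map_mul]
    rw [hsplit]
    exact hpos₁ _ _ (sum_mem fun j _ => hBA₁₀ _ _ (ha j))
  calc 0 ≤ ∑ i, ∑ j, Φ (star (h i) * ι (Φ (star (b i) * b j)) * h j) :=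
        sum_map_star_mul_mul_nonneg ι Φ h (posSemidef_map_star_mul hbimod hA₂B hpos₂ hb) hrow
    _ = Φ (star (∑ i, b i * alternatingProd id (l i)) * ∑ i, b i * alternatingProd id (l i)) := by
        simp only [star_sum, Finset.sum_mul_sum, map_sum,
          hΦ.map_star_mul hstar (hb _) (hb _) (hl _) (hl _), h]

/-- Proposition 6.2: the monotonic product `Φ = Φ₁ ▷ Φ₂` of positive
conditional expectations is positive.  Here `𝔄₁ = 𝔅 ⊕ 𝔄₁⁰` and `𝔄₂ ⊇ 𝔅` are
*-subalgebras of `𝔄`, every element of `𝔄` is a finite sum of alternating products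
`b₀ a₁ b₁ ⋯ aₙ bₙ` (`b_j ∈ 𝔄₂`, `a_j ∈ 𝔄₁⁰`), and `Φ` satisfies the defining relations
of the monotonic product. -/
theorem monotonicProduct_positive {B A : Type*}
    [CStarAlgebra B] [PartialOrder B] [StarOrderedRing B]
    [Ring A] [Algebra ℂ A] [StarRing A] [StarModule ℂ A]
    (ι : B →⋆ₐ[ℂ] A) (hι : Function.Injective ι)
    (A₂ : StarSubalgebra ℂ A) (hA₂B : ∀ c : B, ι c ∈ A₂)
    (A₁₀ : NonUnitalStarSubalgebra ℂ A)
    (hBA₁₀ : ∀ (c : B), ∀ a ∈ A₁₀, ι c * a ∈ A₁₀)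
    (hA₁₀B : ∀ (c : B), ∀ a ∈ A₁₀, a * ι c ∈ A₁₀)
    (hdirect : ∀ (c : B), ∀ a ∈ A₁₀, ι c + a = 0 → c = 0 ∧ a = 0)
    (hgen : ∀ x : A, x ∈ AddSubmonoid.closure
      {y : A | ∃ (n : ℕ) (bs as : ℕ → A),
        (∀ j, j ≤ n → bs j ∈ A₂) ∧ (∀ j, 1 ≤ j → j ≤ n → as j ∈ A₁₀) ∧
        y = bs 0 * (List.ofFn fun t : Fin n => as (t.1 + 1) * bs (t.1 + 1)).prod})
    (Φ : A →ₗ[ℂ] B)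
    (hfix : ∀ c : B, Φ (ι c) = c)
    (hbimod : ∀ (c₁ c₂ : B) (x : A), Φ (ι c₁ * x * ι c₂) = c₁ * Φ x * c₂)
    -- positivity of `Φ₁ = Φ|_{𝔄₁}` (with `𝔄₁ = 𝔅 ⊕ 𝔄₁⁰`) and of `Φ₂ = Φ|_{𝔄₂}`
    (hpos₁ : ∀ (c : B), ∀ a ∈ A₁₀, 0 ≤ Φ (star (ι c + a) * (ι c + a)))
    (hpos₂ : ∀ w ∈ A₂, 0 ≤ Φ (star w * w))
    -- the defining relations of the monotonic product `Φ₁ ▷ Φ₂`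
    (hrel₁ : ∀ a ∈ A₁₀, ∀ a' ∈ A₁₀, ∀ w ∈ A₂, ∀ α β : A,
      Φ (α * a * w * a' * β) = Φ (α * a * ι (Φ w) * a' * β))
    (hrel₂ : ∀ a ∈ A₁₀, ∀ a' ∈ A₁₀, ∀ w ∈ A₂, ∀ β : A,
      Φ (a * w * a' * β) = Φ (a * ι (Φ w) * a' * β))
    (hrel₃ : ∀ a ∈ A₁₀, ∀ a' ∈ A₁₀, ∀ w ∈ A₂, ∀ α : A,
      Φ (α * a * w * a') = Φ (α * a * ι (Φ w) * a'))
    (hrel₄ : ∀ a ∈ A₁₀, ∀ a' ∈ A₁₀, ∀ w ∈ A₂,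
      Φ (a * w * a') = Φ (a * ι (Φ w) * a'))
    (hrel₅ : ∀ w ∈ A₂, ∀ a ∈ A₁₀, ∀ β : A, Φ (w * a * β) = Φ w * Φ (a * β))
    (hrel₆ : ∀ w ∈ A₂, ∀ a ∈ A₁₀, Φ (w * a) = Φ w * Φ a)
    (hrel₇ : ∀ a ∈ A₁₀, ∀ w ∈ A₂, ∀ α : A, Φ (α * a * w) = Φ (α * a) * Φ w)
    (hrel₈ : ∀ a ∈ A₁₀, ∀ w ∈ A₂, Φ (a * w) = Φ a * Φ w) :
    ∀ x : A, 0 ≤ Φ (star x * x) :=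
  monotonicProduct_positive_general ι A₂ hA₂B A₁₀ hBA₁₀ hA₁₀B hgen Φ hfix hbimod hpos₁ hpos₂ hrel₁
    hrel₅ hrel₇
end

section
/- Let 𝔅 be a unital C*-algebra and let 𝔄₁, 𝔄₂ be *-algebras each containing 𝔅 as a unital *-subalgebra, with positive conditional expectations Φ₁ : 𝔄₁ → 𝔅 and Φ₂ : 𝔄₂ → 𝔅. Let a₁,…,aₙ ∈ 𝔄₁ and a_{n+1},…,a_{n+m} ∈ 𝔄₂, and let A = (A_{ij}) be the (n+m)×(n+m) matrix over 𝔅 with entries A_{ij} = Φ₁(a_i* a_j) if i, j ≤ n; A_{ij} = Φ₁(a_i*) Φ₂(a_j) if i ≤ n < j; A_{ij} = Φ₂(a_i*) Φ₁(a_j) if j ≤ n < i; and A_{ij} = Φ₂(a_i* a_j) if i, j > n. Then A is a positive element of M_{n+m}(𝔅); equivalently, Σ_{i,j=1}^{n+m} c_i* A_{ij} c_j ≥ 0 in 𝔅 for all c₁,…,c_{n+m} ∈ 𝔅. -/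
/-!
Embed the coefficients into `𝔄₁` and `𝔄₂` and put `S₁ = ∑_{i ≤ n} aᵢ cᵢ`, `S₂ = ∑_{j > n} aⱼ cⱼ`.
The bimodule property turns the quadratic form into
`Φ₁(S₁*S₁) + Φ₁(S₁*) Φ₂(S₂) + Φ₂(S₂*) Φ₁(S₁) + Φ₂(S₂*S₂)`.
Positivity makes each `Φₖ` *-preserving (by polarization) and gives the Kadison–Schwarz
inequality `Φ(S)* Φ(S) ≤ Φ(S*S)`, read off from `0 ≤ Φ((S - Φ(S))*(S - Φ(S)))`; so the form
dominates `(Φ₁(S₁) + Φ₂(S₂))* (Φ₁(S₁) + Φ₂(S₂)) ≥ 0`.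
-/

/-- The mixed moment matrix of Lemma 6.4: `A_{ij} = Φ₁(aᵢ* aⱼ)` if `i, j ≤ n`,
`A_{ij} = Φ₁(aᵢ*)Φ₂(aⱼ)` if `i ≤ n < j`, `A_{ij} = Φ₂(aᵢ*)Φ₁(aⱼ)` if `j ≤ n < i`,
and `A_{ij} = Φ₂(aᵢ* aⱼ)` if `i, j > n`. -/
noncomputable def mixedEntry {B A₁ A₂ : Type*} [Ring B] [Algebra ℂ B]
    [Ring A₁] [Algebra ℂ A₁] [StarRing A₁]
    [Ring A₂] [Algebra ℂ A₂] [StarRing A₂]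
    (Φ₁ : A₁ →ₗ[ℂ] B) (Φ₂ : A₂ →ₗ[ℂ] B) {n m : ℕ}
    (x : Fin n → A₁) (y : Fin m → A₂) (i j : Fin (n + m)) : B :=
  if hi : i.1 < n then
    if hj : j.1 < n then Φ₁ (star (x ⟨i.1, hi⟩) * x ⟨j.1, hj⟩)
    else Φ₁ (star (x ⟨i.1, hi⟩)) * Φ₂ (y ⟨j.1 - n, by have := j.isLt; omega⟩)
  else
    if hj : j.1 < n then
      Φ₂ (star (y ⟨i.1 - n, by have := i.isLt; omega⟩)) * Φ₁ (x ⟨j.1, hj⟩)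
    else Φ₂ (star (y ⟨i.1 - n, by have := i.isLt; omega⟩) *
      y ⟨j.1 - n, by have := j.isLt; omega⟩)

structure IsCondExp {B A : Type*} [Ring B] [Algebra ℂ B] [Star B] [Ring A] [Algebra ℂ A] [Star A]
    (ι : B →⋆ₐ[ℂ] A) (Φ : A →ₗ[ℂ] B) : Prop where
  map_apply : ∀ c : B, Φ (ι c) = c
  map_mul_mul : ∀ (c₁ c₂ : B) (x : A), Φ (ι c₁ * x * ι c₂) = c₁ * Φ x * c₂

namespace IsCondExp

variable {B A : Type*} [Ring B] [Algebra ℂ B] [StarRing B]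
  [Ring A] [Algebra ℂ A] [StarRing A] {ι : B →⋆ₐ[ℂ] A} {Φ : A →ₗ[ℂ] B}

theorem map_mul_left (hΦ : IsCondExp ι Φ) (c : B) (x : A) : Φ (ι c * x) = c * Φ x := by
  simpa using hΦ.map_mul_mul c 1 x

theorem map_mul_right (hΦ : IsCondExp ι Φ) (x : A) (c : B) : Φ (x * ι c) = Φ x * c := by
  simpa using hΦ.map_mul_mul 1 c x

section Sums

variable {α : Type*} [Fintype α] (hΦ : IsCondExp ι Φ) (x : α → A) (c : α → B)
include hΦ

theorem map_sum_mul : Φ (∑ i, x i * ι (c i)) = ∑ i, Φ (x i) * c i := by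
  simp only [map_sum, hΦ.map_mul_right]

theorem map_star_sum_mul : Φ (star (∑ i, x i * ι (c i))) = ∑ i, star (c i) * Φ (star (x i)) := by
  simp only [star_sum, star_mul, ← StarHomClass.map_star, map_sum, hΦ.map_mul_left]

theorem sum_sum_star_mul_map_mul_mul :
    ∑ i, ∑ j, star (c i) * Φ (star (x i) * x j) * c j
      = Φ (star (∑ i, x i * ι (c i)) * ∑ j, x j * ι (c j)) := by
  simp only [star_sum, Finset.sum_mul_sum, map_sum]
  refine Finset.sum_congr rfl fun i _ => Finset.sum_congr rfl fun j _ => ?_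
  rw [← hΦ.map_mul_mul]
  simp only [star_mul, StarHomClass.map_star, mul_assoc]

end Sums

variable [PartialOrder B] [StarOrderedRing B]

theorem isSelfAdjoint_star_mul_add_mul (hΦ : IsCondExp ι Φ) (hpos : ∀ a : A, 0 ≤ Φ (star a * a))
    (b : B) (z : A) : IsSelfAdjoint (star b * Φ z + Φ (star z) * b) := by
  have hexp : Φ (star (ι b + z) * (ι b + z))
      = star b * b + (star b * Φ z + Φ (star z) * b) + Φ (star z * z) := by
    rw [star_add, ← StarHomClass.map_star, add_mul, mul_add, mul_add, ← map_mul, map_add, map_add,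
      map_add, hΦ.map_apply, hΦ.map_mul_left, hΦ.map_mul_right]
    abel
  have h := IsSelfAdjoint.of_nonneg (hpos (ι b + z))
  rw [hexp] at h
  convert (h.sub (IsSelfAdjoint.star_mul_self b)).sub (IsSelfAdjoint.of_nonneg (hpos z)) using 1
  abel

variable [StarModule ℂ B]

theorem map_star (hΦ : IsCondExp ι Φ) (hpos : ∀ a : A, 0 ≤ Φ (star a * a)) (z : A) :
    Φ (star z) = star (Φ z) := by
  -- polarization with `b = 1` and `b = i`
  have h₁ := (hΦ.isSelfAdjoint_star_mul_add_mul hpos 1 z).star_eq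
  have h₂ := (hΦ.isSelfAdjoint_star_mul_add_mul hpos (Complex.I • 1) z).star_eq
  simp only [star_one, one_mul, mul_one, star_add, star_smul, Complex.star_def, map_neg,
    Complex.conj_I, neg_neg, smul_mul_assoc, mul_smul_comm] at h₁ h₂
  linear_combination (norm := match_scalars <;> ring_nf <;> simp)
    (-1 / 2 : ℂ) • h₁ + (Complex.I / 2) • h₂

theorem star_map_mul_map_le (hΦ : IsCondExp ι Φ) (hpos : ∀ a : A, 0 ≤ Φ (star a * a)) (z : A) :
    star (Φ z) * Φ z ≤ Φ (star z * z) := by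
  have h := hpos (z - ι (Φ z))
  rw [star_sub, ← StarHomClass.map_star, sub_mul, mul_sub, mul_sub, map_sub, map_sub, map_sub,
    hΦ.map_mul_right, hΦ.map_mul_left, ← map_mul ι, hΦ.map_apply, hΦ.map_star hpos] at h
  simpa using h

end IsCondExp

section MixedEntry

variable {B A₁ A₂ : Type*} [Ring B] [Algebra ℂ B]
  [Ring A₁] [Algebra ℂ A₁] [StarRing A₁] [Ring A₂] [Algebra ℂ A₂] [StarRing A₂]
  (Φ₁ : A₁ →ₗ[ℂ] B) (Φ₂ : A₂ →ₗ[ℂ] B) {n m : ℕ} (x : Fin n → A₁) (y : Fin m → A₂)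

@[simp]
theorem mixedEntry_castAdd_castAdd (i j : Fin n) :
    mixedEntry Φ₁ Φ₂ x y (Fin.castAdd m i) (Fin.castAdd m j) = Φ₁ (star (x i) * x j) := by
  simp [mixedEntry]

@[simp]
theorem mixedEntry_castAdd_natAdd (i : Fin n) (j : Fin m) :
    mixedEntry Φ₁ Φ₂ x y (Fin.castAdd m i) (Fin.natAdd n j) = Φ₁ (star (x i)) * Φ₂ (y j) := by
  simp [mixedEntry]

@[simp]
theorem mixedEntry_natAdd_castAdd (i : Fin m) (j : Fin n) :
    mixedEntry Φ₁ Φ₂ x y (Fin.natAdd n i) (Fin.castAdd m j) = Φ₂ (star (y i)) * Φ₁ (x j) := by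
  simp [mixedEntry]

@[simp]
theorem mixedEntry_natAdd_natAdd (i j : Fin m) :
    mixedEntry Φ₁ Φ₂ x y (Fin.natAdd n i) (Fin.natAdd n j) = Φ₂ (star (y i) * y j) := by
  simp [mixedEntry]

theorem sum_sum_star_mul_mixedEntry_mul [StarRing B] {ι₁ : B →⋆ₐ[ℂ] A₁} {ι₂ : B →⋆ₐ[ℂ] A₂}
    (hΦ₁ : IsCondExp ι₁ Φ₁) (hΦ₂ : IsCondExp ι₂ Φ₂) (c : Fin (n + m) → B) :
    ∑ i, ∑ j, star (c i) * mixedEntry Φ₁ Φ₂ x y i j * c j =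
      let S₁ := ∑ i, x i * ι₁ (c (Fin.castAdd m i))
      let S₂ := ∑ j, y j * ι₂ (c (Fin.natAdd n j))
      Φ₁ (star S₁ * S₁) + Φ₁ (star S₁) * Φ₂ S₂ + (Φ₂ (star S₂) * Φ₁ S₁ + Φ₂ (star S₂ * S₂)) := by
  simp only [Fin.sum_univ_add, Finset.sum_add_distrib, mixedEntry_castAdd_castAdd,
    mixedEntry_castAdd_natAdd, mixedEntry_natAdd_castAdd, mixedEntry_natAdd_natAdd]
  rw [hΦ₁.sum_sum_star_mul_map_mul_mul, hΦ₂.sum_sum_star_mul_map_mul_mul, hΦ₁.map_sum_mul,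
    hΦ₂.map_sum_mul, hΦ₁.map_star_sum_mul, hΦ₂.map_star_sum_mul, Finset.sum_mul_sum,
    Finset.sum_mul_sum]
  simp only [mul_assoc]
  abel

end MixedEntry

theorem mixed_moment_matrix_positive_general {B A₁ A₂ : Type*}
    [CStarAlgebra B] [PartialOrder B] [StarOrderedRing B]
    [Ring A₁] [Algebra ℂ A₁] [StarRing A₁]
    [Ring A₂] [Algebra ℂ A₂] [StarRing A₂]
    (ι₁ : B →⋆ₐ[ℂ] A₁)
    (ι₂ : B →⋆ₐ[ℂ] A₂)
    (Φ₁ : A₁ →ₗ[ℂ] B) (Φ₂ : A₂ →ₗ[ℂ] B)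
    (hfix₁ : ∀ c : B, Φ₁ (ι₁ c) = c)
    (hbimod₁ : ∀ (c₁ c₂ : B) (x : A₁), Φ₁ (ι₁ c₁ * x * ι₁ c₂) = c₁ * Φ₁ x * c₂)
    (hfix₂ : ∀ c : B, Φ₂ (ι₂ c) = c)
    (hbimod₂ : ∀ (c₁ c₂ : B) (x : A₂), Φ₂ (ι₂ c₁ * x * ι₂ c₂) = c₁ * Φ₂ x * c₂)
    (hpos₁ : ∀ a : A₁, 0 ≤ Φ₁ (star a * a))
    (hpos₂ : ∀ a : A₂, 0 ≤ Φ₂ (star a * a))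
    {n m : ℕ} (x : Fin n → A₁) (y : Fin m → A₂) :
    ∀ c : Fin (n + m) → B,
      0 ≤ ∑ i : Fin (n + m), ∑ j : Fin (n + m),
        star (c i) * mixedEntry Φ₁ Φ₂ x y i j * c j := by
  intro c
  have hΦ₁ : IsCondExp ι₁ Φ₁ := ⟨hfix₁, hbimod₁⟩
  have hΦ₂ : IsCondExp ι₂ Φ₂ := ⟨hfix₂, hbimod₂⟩
  rw [sum_sum_star_mul_mixedEntry_mul Φ₁ Φ₂ x y hΦ₁ hΦ₂ c]
  dsimp only
  set S₁ := ∑ i, x i * ι₁ (c (Fin.castAdd m i))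
  set S₂ := ∑ j, y j * ι₂ (c (Fin.natAdd n j))
  rw [hΦ₁.map_star hpos₁, hΦ₂.map_star hpos₂]
  calc (0 : B) ≤ star (Φ₁ S₁ + Φ₂ S₂) * (Φ₁ S₁ + Φ₂ S₂) := star_mul_self_nonneg _
    _ = star (Φ₁ S₁) * Φ₁ S₁ + star (Φ₁ S₁) * Φ₂ S₂
          + (star (Φ₂ S₂) * Φ₁ S₁ + star (Φ₂ S₂) * Φ₂ S₂) := by
      rw [star_add, add_mul, mul_add, mul_add]
    _ ≤ _ := add_le_add (add_le_add (hΦ₁.star_map_mul_map_le hpos₁ S₁) le_rfl)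
          (add_le_add le_rfl (hΦ₂.star_map_mul_map_le hpos₂ S₂))

/-- Lemma 6.4: for positive conditional expectations
`Φ₁ : 𝔄₁ → 𝔅` and `Φ₂ : 𝔄₂ → 𝔅` and elements `a₁, …, aₙ ∈ 𝔄₁`,
`a_{n+1}, …, a_{n+m} ∈ 𝔄₂`, the mixed moment matrix `A = (A_{ij})` is a positive element
of `M_{n+m}(𝔅)`; equivalently `Σ_{i,j} cᵢ* A_{ij} cⱼ ≥ 0` in `𝔅` for all
`c₁, …, c_{n+m} ∈ 𝔅`. -/
theorem mixed_moment_matrix_positive {B A₁ A₂ : Type*}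
    [CStarAlgebra B] [PartialOrder B] [StarOrderedRing B]
    [Ring A₁] [Algebra ℂ A₁] [StarRing A₁] [StarModule ℂ A₁]
    [Ring A₂] [Algebra ℂ A₂] [StarRing A₂] [StarModule ℂ A₂]
    (ι₁ : B →⋆ₐ[ℂ] A₁) (hι₁ : Function.Injective ι₁)
    (ι₂ : B →⋆ₐ[ℂ] A₂) (hι₂ : Function.Injective ι₂)
    (Φ₁ : A₁ →ₗ[ℂ] B) (Φ₂ : A₂ →ₗ[ℂ] B)
    (hfix₁ : ∀ c : B, Φ₁ (ι₁ c) = c)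
    (hbimod₁ : ∀ (c₁ c₂ : B) (x : A₁), Φ₁ (ι₁ c₁ * x * ι₁ c₂) = c₁ * Φ₁ x * c₂)
    (hfix₂ : ∀ c : B, Φ₂ (ι₂ c) = c)
    (hbimod₂ : ∀ (c₁ c₂ : B) (x : A₂), Φ₂ (ι₂ c₁ * x * ι₂ c₂) = c₁ * Φ₂ x * c₂)
    (hpos₁ : ∀ a : A₁, 0 ≤ Φ₁ (star a * a))
    (hpos₂ : ∀ a : A₂, 0 ≤ Φ₂ (star a * a))
    {n m : ℕ} (x : Fin n → A₁) (y : Fin m → A₂) :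
    ∀ c : Fin (n + m) → B,
      0 ≤ ∑ i : Fin (n + m), ∑ j : Fin (n + m),
        star (c i) * mixedEntry Φ₁ Φ₂ x y i j * c j :=
  mixed_moment_matrix_positive_general ι₁ ι₂ Φ₁ Φ₂ hfix₁ hbimod₁ hfix₂ hbimod₂ hpos₁ hpos₂ x y
end

section
/- Let 𝔅 be a unital algebra and 𝔄 an algebra containing 𝔅 as a subalgebra. Let 𝔄₂ ⊆ 𝔄 be a subalgebra containing 𝔅, and 𝔄₁ = 𝔅 ⊕ 𝔄₁⁰ a subalgebra of 𝔄, where 𝔄₁⁰ is a subalgebra with 𝔅·𝔄₁⁰ ⊆ 𝔄₁⁰ and 𝔄₁⁰·𝔅 ⊆ 𝔄₁⁰. Let Φ : 𝔄 → 𝔅 be a conditional expectation satisfying the monotonic product relations: for all a, a' ∈ 𝔄₁⁰, b ∈ 𝔄₂ and α, β ∈ 𝔄: Φ(α a b a' β) = Φ(α a Φ₂(b) a' β), Φ(b a β) = Φ₂(b) Φ(a β), Φ(α a b) = Φ(α a) Φ₂(b), where Φ₂ = Φ|_{𝔄₂} (and the corresponding relations with α and/or β omitted). Then for every n ≥ 1,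 every alternating choice ε(1) ≠ ε(2) ≠ ⋯ ≠ ε(n), ε(j) ∈ {1,2}, and all a_j with a_j ∈ 𝔄₁⁰ when ε(j) = 1 and a_j ∈ 𝔄₂ with Φ(a_j) = 0 when ε(j) = 2, such that at least one ε(j) = 2, one has Φ(a₁a₂⋯aₙ) = 0; consequently Φ(a₁a₂⋯aₙ) = Φ(a₁)Φ(a₂)⋯Φ(aₙ) for all such alternating tuples. -/
/-! Only the first two or three factors of an alternating word matter. If the word starts with a
`Φ₂`-centered `w ∈ 𝔄₂` followed by `a ∈ 𝔄₁⁰`, the relation `Φ(w a β) = Φ₂(w) Φ(a β)` kills it;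
if it starts with `a w a'`, the relation `Φ(a w a' β) = Φ(a Φ₂(w) a' β)` does; the word `a w`
is handled by `Φ(a w) = Φ(a) Φ₂(w)`. A word without factors from `𝔄₂` is, by alternation, a
single letter, so the factorisation is then trivial. -/

theorem eq_zero_of_alternating_of_forall_eq {α : Type*} {n : ℕ} {ε : Fin (n + 1) → α} {b : α}
    (halt : ∀ j : Fin n, ε j.castSucc ≠ ε j.succ) (hconst : ∀ j, ε j = b) : n = 0 := by
  cases n with
  | zero => rfl
  | succ m => exact absurd ((hconst 0).trans (hconst 1).symm) (by simpa using halt 0)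

section MonotonicProduct

variable {B A : Type*} [Ring B] [Algebra ℂ B] [Ring A] [Algebra ℂ A]
  {ι : B →ₐ[ℂ] A} {A₂ : Subalgebra ℂ A} {A₁₀ : NonUnitalSubalgebra ℂ A} {Φ : A →ₗ[ℂ] B}

theorem map_prod_ofFn_eq_zero_of_alternating
    (hrel₂ : ∀ a ∈ A₁₀, ∀ a' ∈ A₁₀, ∀ w ∈ A₂, ∀ β : A,
      Φ (a * w * a' * β) = Φ (a * ι (Φ w) * a' * β))
    (hrel₅ : ∀ w ∈ A₂, ∀ a ∈ A₁₀, ∀ β : A, Φ (w * a * β) = Φ w * Φ (a * β))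
    (hrel₈ : ∀ a ∈ A₁₀, ∀ w ∈ A₂, Φ (a * w) = Φ a * Φ w)
    {n : ℕ} {ε : Fin (n + 1) → Bool} {a : Fin (n + 1) → A}
    (halt : ∀ j : Fin n, ε j.castSucc ≠ ε j.succ)
    (hmem : ∀ j, (ε j = true → a j ∈ A₁₀) ∧ (ε j = false → a j ∈ A₂ ∧ Φ (a j) = 0))
    (hcentered : ∃ j, ε j = false) :
    Φ (List.ofFn a).prod = 0 := by
  cases h0 : ε 0 with
  | false =>
    obtain ⟨hw, hΦw⟩ := (hmem 0).2 h0
    cases n with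
    | zero => simpa using hΦw
    | succ m =>
      have h1 : ε 1 = true := by simpa [h0] using Bool.eq_not_of_ne (halt 0).symm
      simp only [List.ofFn_succ, List.prod_cons, ← mul_assoc, Fin.succ_zero_eq_one]
      rw [hrel₅ _ hw _ ((hmem 1).1 h1), hΦw, zero_mul]
  | true =>
    have ha := (hmem 0).1 h0
    rcases n with _ | _ | m
    · obtain ⟨j, hj⟩ := hcentered
      rw [Fin.fin_one_eq_zero j, h0] at hj
      cases hj
    · have h1 : ε 1 = false := by simpa [h0] using Bool.eq_not_of_ne (halt 0).symm
      obtain ⟨hw, hΦw⟩ := (hmem 1).2 h1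
      simp only [List.ofFn_succ, List.ofFn_zero, List.prod_cons, List.prod_nil, mul_one,
        Fin.succ_zero_eq_one]
      rw [hrel₈ _ ha _ hw, hΦw, mul_zero]
    · have h1 : ε 1 = false := by simpa [h0] using Bool.eq_not_of_ne (halt 0).symm
      have h2 : ε 2 = true := by simpa [h1] using Bool.eq_not_of_ne (halt 1).symm
      obtain ⟨hw, hΦw⟩ := (hmem 1).2 h1
      simp only [List.ofFn_succ, List.prod_cons, ← mul_assoc, Fin.succ_zero_eq_one,
        Fin.succ_one_eq_two]
      rw [hrel₂ _ ha _ ((hmem 2).1 h2) _ hw, hΦw, map_zero, mul_zero, zero_mul, zero_mul,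
        map_zero]

end MonotonicProduct

theorem monotonicProduct_eq_condFreeProduct_general {B A : Type*}
    [Ring B] [Algebra ℂ B] [Ring A] [Algebra ℂ A]
    (ι : B →ₐ[ℂ] A)
    (A₂ : Subalgebra ℂ A)
    (A₁₀ : NonUnitalSubalgebra ℂ A)
    (Φ : A →ₗ[ℂ] B)
    -- the defining relations of the monotonic product `Φ₁ ▷ Φ₂`
    (hrel₂ : ∀ a ∈ A₁₀, ∀ a' ∈ A₁₀, ∀ w ∈ A₂, ∀ β : A,
      Φ (a * w * a' * β) = Φ (a * ι (Φ w) * a' * β))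
    (hrel₅ : ∀ w ∈ A₂, ∀ a ∈ A₁₀, ∀ β : A, Φ (w * a * β) = Φ w * Φ (a * β))
    (hrel₈ : ∀ a ∈ A₁₀, ∀ w ∈ A₂, Φ (a * w) = Φ a * Φ w) :
    ∀ (n : ℕ) (ε : Fin (n + 1) → Bool) (a : Fin (n + 1) → A),
      (∀ j : Fin n, ε j.castSucc ≠ ε j.succ) →
      (∀ j, (ε j = true → a j ∈ A₁₀) ∧ (ε j = false → a j ∈ A₂ ∧ Φ (a j) = 0)) →
      ((∃ j, ε j = false) → Φ (List.ofFn a).prod = 0) ∧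
        Φ (List.ofFn a).prod = (List.ofFn fun j => Φ (a j)).prod := by
  intro n ε a halt hmem
  have hvanish := map_prod_ofFn_eq_zero_of_alternating hrel₂ hrel₅ hrel₈ halt hmem
  refine ⟨hvanish, ?_⟩
  by_cases hcentered : ∃ j, ε j = false
  · obtain ⟨j, hj⟩ := hcentered
    rw [hvanish ⟨j, hj⟩]
    exact (List.prod_eq_zero (List.mem_ofFn.2 ⟨j, ((hmem j).2 hj).2⟩)).symm
  · have hn : n = 0 :=
      eq_zero_of_alternating_of_forall_eq halt (b := true) (by simpa using hcentered)
    subst hn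
    simp

/-- Theorem 6.7: a conditional expectation `Φ` satisfying the defining
relations of the monotonic product `Φ₁ ▷ Φ₂` (with `𝔄₁ = 𝔅 ⊕ 𝔄₁⁰`) vanishes on every
alternating product of `δ`-centered elements of `𝔄₁` (i.e. elements of `𝔄₁⁰`) and
`Φ₂`-centered elements of `𝔄₂` containing at least one factor from `𝔄₂`; consequently
`Φ(a₁ ⋯ aₙ) = Φ(a₁) ⋯ Φ(aₙ)` on all such alternating tuples, so `Φ₁ ▷ Φ₂` coincides
with the conditionally free product `Φ₁ ∗_{(δ, Φ₂)} Φ₂`. -/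
theorem monotonicProduct_eq_condFreeProduct {B A : Type*}
    [Ring B] [Algebra ℂ B] [Ring A] [Algebra ℂ A]
    (ι : B →ₐ[ℂ] A) (hι : Function.Injective ι)
    (A₂ : Subalgebra ℂ A) (hA₂B : ∀ c : B, ι c ∈ A₂)
    (A₁₀ : NonUnitalSubalgebra ℂ A)
    (hBA₁₀ : ∀ (c : B), ∀ a ∈ A₁₀, ι c * a ∈ A₁₀)
    (hA₁₀B : ∀ (c : B), ∀ a ∈ A₁₀, a * ι c ∈ A₁₀)
    (hdirect : ∀ (c : B), ∀ a ∈ A₁₀, ι c + a = 0 → c = 0 ∧ a = 0)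
    (Φ : A →ₗ[ℂ] B)
    (hfix : ∀ c : B, Φ (ι c) = c)
    (hbimod : ∀ (c₁ c₂ : B) (x : A), Φ (ι c₁ * x * ι c₂) = c₁ * Φ x * c₂)
    -- the defining relations of the monotonic product `Φ₁ ▷ Φ₂`
    (hrel₁ : ∀ a ∈ A₁₀, ∀ a' ∈ A₁₀, ∀ w ∈ A₂, ∀ α β : A,
      Φ (α * a * w * a' * β) = Φ (α * a * ι (Φ w) * a' * β))
    (hrel₂ : ∀ a ∈ A₁₀, ∀ a' ∈ A₁₀, ∀ w ∈ A₂, ∀ β : A,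
      Φ (a * w * a' * β) = Φ (a * ι (Φ w) * a' * β))
    (hrel₃ : ∀ a ∈ A₁₀, ∀ a' ∈ A₁₀, ∀ w ∈ A₂, ∀ α : A,
      Φ (α * a * w * a') = Φ (α * a * ι (Φ w) * a'))
    (hrel₄ : ∀ a ∈ A₁₀, ∀ a' ∈ A₁₀, ∀ w ∈ A₂,
      Φ (a * w * a') = Φ (a * ι (Φ w) * a'))
    (hrel₅ : ∀ w ∈ A₂, ∀ a ∈ A₁₀, ∀ β : A, Φ (w * a * β) = Φ w * Φ (a * β))
    (hrel₆ : ∀ w ∈ A₂, ∀ a ∈ A₁₀, Φ (w * a) = Φ w * Φ a)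
    (hrel₇ : ∀ a ∈ A₁₀, ∀ w ∈ A₂, ∀ α : A, Φ (α * a * w) = Φ (α * a) * Φ w)
    (hrel₈ : ∀ a ∈ A₁₀, ∀ w ∈ A₂, Φ (a * w) = Φ a * Φ w) :
    ∀ (n : ℕ) (ε : Fin (n + 1) → Bool) (a : Fin (n + 1) → A),
      (∀ j : Fin n, ε j.castSucc ≠ ε j.succ) →
      (∀ j, (ε j = true → a j ∈ A₁₀) ∧ (ε j = false → a j ∈ A₂ ∧ Φ (a j) = 0)) →
      ((∃ j, ε j = false) → Φ (List.ofFn a).prod = 0) ∧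
        Φ (List.ofFn a).prod = (List.ofFn fun j => Φ (a j)).prod :=
  monotonicProduct_eq_condFreeProduct_general ι A₂ A₁₀ Φ hrel₂ hrel₅ hrel₈
end
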